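/- arXiv:1907.01147 — 12 statements merged into one kernel-verified Lean document; each statement's English description precedes it below -/
import Mathlib

section
/- Let γ₀ ≥ 0, γ₁ > 0, C₀ > 0, C₁ > 0, and let (A_{m,n})_{m,n∈ℕ} be a matrix of complex numbers satisfying |A_{m,n}| ≤ C₀·n^{γ₀} for n > m and |A_{m,n}| ≤ C₁·n^{γ₁}·m^{−γ₁} for n ≤ m. Then for every ε ∈ (0,1) there exists a constant K > 0 such that: for every complex sequence (c_n)_{n≥1} with S := sup_n |c_n|·n^{γ₀+γ₁+1+ε} < ∞, the series a_m = Σ_{n=1}^∞ A_{m,n} c_n converges absolutely for each m, and sup_m |a_m|·m^{γ₁} ≤ K·S. That is, the matrix operator is continuous from s_{γ₀+γ₁+1+ε} into s_{γ₁}. -/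
/-- A matrix with column decay `C₁ n^{γ₁} m^{-γ₁}` for `n ≤ m` and row growth
`C₀ n^{γ₀}` for `n > m` defines a continuous operator from `s_{γ₀+γ₁+1+ε}` into
`s_{γ₁}` for every `ε ∈ (0,1)`. -/
theorem stmt_4 (γ₀ γ₁ C₀ C₁ : ℝ) (hγ₀ : 0 ≤ γ₀) (hγ₁ : 0 < γ₁)
    (hC₀ : 0 < C₀) (hC₁ : 0 < C₁) (A : ℕ → ℕ → ℂ)
    (hA : ∀ m n : ℕ, 1 ≤ m → 1 ≤ n →
      (m < n → ‖A m n‖ ≤ C₀ * (n:ℝ) ^ γ₀) ∧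
      (n ≤ m → ‖A m n‖ ≤ C₁ * (n:ℝ) ^ γ₁ * (m:ℝ) ^ (-γ₁))) :
    ∀ ε : ℝ, 0 < ε → ε < 1 → ∃ K > (0:ℝ), ∀ c : ℕ → ℂ, ∀ S : ℝ,
      (∀ n : ℕ, 1 ≤ n → ‖c n‖ * (n:ℝ) ^ (γ₀ + γ₁ + 1 + ε) ≤ S) →
      ∀ m : ℕ, 1 ≤ m →
        Summable (fun n : ℕ => ‖A m (n+1) * c (n+1)‖) ∧
        ‖∑' n : ℕ, A m (n+1) * c (n+1)‖ * (m:ℝ) ^ γ₁ ≤ K * S := by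
  intro ε hε hε1
  set q : ℝ := γ₀ + γ₁ + 1 + ε with hq
  have hsum : Summable (fun n : ℕ => ((n:ℝ)) ^ (-(1+ε))) :=
    Real.summable_nat_rpow.mpr (by linarith)
  set T : ℝ := ∑' n : ℕ, ((n:ℝ)) ^ (-(1+ε)) with hT
  have hT0 : 0 ≤ T := tsum_nonneg fun n => Real.rpow_nonneg (Nat.cast_nonneg n) _
  refine ⟨(C₀ + C₁) * (T + 1), by positivity, ?_⟩
  intro c S hc m hm
  have hS : 0 ≤ S := le_trans (by positivity) (hc 1 le_rfl)
  have hm' : (1:ℝ) ≤ (m:ℝ) := by exact_mod_cast hm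
  have hmpos : (0:ℝ) < (m:ℝ) := by linarith
  -- pointwise bound
  have key : ∀ n : ℕ, 1 ≤ n →
      ‖A m n * c n‖ ≤ (C₀ + C₁) * S * (m:ℝ) ^ (-γ₁) * (n:ℝ) ^ (-(1+ε)) := by
    intro n hn
    have hn' : (1:ℝ) ≤ (n:ℝ) := by exact_mod_cast hn
    have hnpos : (0:ℝ) < (n:ℝ) := by linarith
    have hcn : ‖c n‖ ≤ S * (n:ℝ) ^ (-q) := by
      have h1 := hc n hn
      have h2 : ‖c n‖ ≤ S / (n:ℝ) ^ q :=
        (le_div_iff₀ (Real.rpow_pos_of_pos hnpos q)).mpr h1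
      rwa [div_eq_mul_inv, ← Real.rpow_neg hnpos.le] at h2
    rw [norm_mul]
    rcases le_or_gt n m with hnm | hnm
    · have hAb := (hA m n hm hn).2 hnm
      calc ‖A m n‖ * ‖c n‖
          ≤ (C₁ * (n:ℝ) ^ γ₁ * (m:ℝ) ^ (-γ₁)) * (S * (n:ℝ) ^ (-q)) := by
            apply mul_le_mul hAb hcn (norm_nonneg _)
            positivity
        _ = C₁ * S * (m:ℝ) ^ (-γ₁) * (n:ℝ) ^ (γ₁ + -q) := by
            rw [Real.rpow_add hnpos]; ring
        _ ≤ (C₀ + C₁) * S * (m:ℝ) ^ (-γ₁) * (n:ℝ) ^ (-(1+ε)) := by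
            apply mul_le_mul
            · gcongr; linarith
            · exact Real.rpow_le_rpow_of_exponent_le hn' (by simp [hq]; linarith)
            · positivity
            · positivity
    · have hAb := (hA m n hm hn).1 hnm
      calc ‖A m n‖ * ‖c n‖
          ≤ (C₀ * (n:ℝ) ^ γ₀) * (S * (n:ℝ) ^ (-q)) := by
            apply mul_le_mul hAb hcn (norm_nonneg _)
            positivity
        _ = C₀ * S * ((n:ℝ) ^ (-γ₁) * (n:ℝ) ^ (-(1+ε))) := by
            rw [← Real.rpow_add hnpos, show -γ₁ + -(1+ε) = γ₀ + -q by
              simp only [hq]; ring, Real.rpow_add hnpos]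
            ring
        _ ≤ (C₀ + C₁) * S * ((m:ℝ) ^ (-γ₁) * (n:ℝ) ^ (-(1+ε))) := by
            apply mul_le_mul
            · gcongr; linarith
            · apply mul_le_mul_of_nonneg_right _ (by positivity)
              exact Real.rpow_le_rpow_of_nonpos hmpos (by exact_mod_cast hnm.le)
                (by linarith)
            · positivity
            · positivity
        _ = (C₀ + C₁) * S * (m:ℝ) ^ (-γ₁) * (n:ℝ) ^ (-(1+ε)) := by ring
  have hsum1 : Summable (fun n : ℕ =>
      (C₀ + C₁) * S * (m:ℝ) ^ (-γ₁) * (((n+1:ℕ)):ℝ) ^ (-(1+ε))) :=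
    (((summable_nat_add_iff 1).mpr hsum)).mul_left _
  have hsummable : Summable (fun n : ℕ => ‖A m (n+1) * c (n+1)‖) :=
    Summable.of_nonneg_of_le (fun n => norm_nonneg _)
      (fun n => key (n+1) (Nat.le_add_left 1 n)) hsum1
  refine ⟨hsummable, ?_⟩
  have hshift : ∑' n : ℕ, (((n+1:ℕ)):ℝ) ^ (-(1+ε)) ≤ T := by
    rw [hT, Summable.tsum_eq_zero_add hsum]
    have h0 : ((0:ℕ):ℝ) ^ (-(1+ε)) = 0 := by
      rw [Nat.cast_zero, Real.zero_rpow (by linarith)]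
    rw [h0, zero_add]
  have hbound : ‖∑' n : ℕ, A m (n+1) * c (n+1)‖
      ≤ (C₀ + C₁) * S * (m:ℝ) ^ (-γ₁) * T := by
    calc ‖∑' n : ℕ, A m (n+1) * c (n+1)‖
        ≤ ∑' n : ℕ, ‖A m (n+1) * c (n+1)‖ := norm_tsum_le_tsum_norm hsummable
      _ ≤ ∑' n : ℕ, (C₀ + C₁) * S * (m:ℝ) ^ (-γ₁) * (((n+1:ℕ)):ℝ) ^ (-(1+ε)) :=
          Summable.tsum_le_tsum (fun n => key (n+1) (Nat.le_add_left 1 n)) hsummable hsum1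
      _ = (C₀ + C₁) * S * (m:ℝ) ^ (-γ₁) * ∑' n : ℕ, (((n+1:ℕ)):ℝ) ^ (-(1+ε)) := by
          rw [tsum_mul_left]
      _ ≤ (C₀ + C₁) * S * (m:ℝ) ^ (-γ₁) * T := by
          apply mul_le_mul_of_nonneg_left hshift (by positivity)
  calc ‖∑' n : ℕ, A m (n+1) * c (n+1)‖ * (m:ℝ) ^ γ₁
      ≤ ((C₀ + C₁) * S * (m:ℝ) ^ (-γ₁) * T) * (m:ℝ) ^ γ₁ := by
        apply mul_le_mul_of_nonneg_right hbound (by positivity)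
    _ = (C₀ + C₁) * S * T * ((m:ℝ) ^ (-γ₁) * (m:ℝ) ^ γ₁) := by ring
    _ = (C₀ + C₁) * T * S := by
        rw [← Real.rpow_add hmpos]; simp; ring
    _ ≤ (C₀ + C₁) * (T + 1) * S := by
        apply mul_le_mul_of_nonneg_right _ hS
        gcongr; linarith
end

section
/- Let (A_{m,n})_{m,n∈ℕ} be a matrix of complex numbers such that there exist γ₀ ≥ 0 and C₀ > 0 with |A_{m,n}| ≤ C₀·n^{γ₀} for all n > m, and for every γ > 0 there exists C_γ > 0 with |A_{m,n}| ≤ C_γ·n^γ·m^{−γ} for all n ≤ m. Then for every rapidly decreasing complex sequence (c_n)_{n≥1} (i.e., sup_n |c_n|·n^k < ∞ for every k ∈ ℕ), each series a_m = Σ_{n=1}^∞ A_{m,n} c_n converges absolutely and the sequence (a_m)_{m≥1} is again rapidly decreasing; moreover, for every k ∈ ℕ there exist K > 0 and k' ∈ ℕ such that sup_m |a_m|·m^k ≤ K·sup_n |c_n|·n^{k'} for all such sequences. That is, the matrix operator is a continuous operator from 𝐬 into 𝐬. -/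
open Real

private lemma stmt5_aux (A : ℕ → ℕ → ℂ)
    (hA₀ : ∃ γ₀ ≥ (0:ℝ), ∃ C₀ > (0:ℝ), ∀ m n : ℕ, 1 ≤ m → 1 ≤ n → m < n →
      ‖A m n‖ ≤ C₀ * (n:ℝ) ^ γ₀)
    (hA₁ : ∀ γ : ℝ, 0 < γ → ∃ Cγ > (0:ℝ), ∀ m n : ℕ, 1 ≤ m → 1 ≤ n → n ≤ m →
      ‖A m n‖ ≤ Cγ * (n:ℝ) ^ γ * (m:ℝ) ^ (-γ)) (k : ℕ) :
    ∃ K > (0:ℝ), ∃ k' : ℕ, ∀ c : ℕ → ℂ, ∀ S : ℝ,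
      (∀ n : ℕ, 1 ≤ n → ‖c n‖ * (n:ℝ) ^ (k':ℝ) ≤ S) →
      (∀ m : ℕ, 1 ≤ m → Summable (fun n : ℕ => ‖A m (n+1) * c (n+1)‖)) ∧
      (∀ m : ℕ, 1 ≤ m →
        ‖∑' n : ℕ, A m (n+1) * c (n+1)‖ * (m:ℝ) ^ (k:ℝ) ≤ K * S) := by
  obtain ⟨γ₀, hγ₀, C₀, hC₀, h₀⟩ := hA₀
  obtain ⟨Cγ, hCγ, h₁⟩ := hA₁ ((k:ℝ)+1) (by positivity)
  set g : ℕ := k + ⌈γ₀⌉₊ with hgdef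
  set k' : ℕ := g + 2 with hk'def
  set D : ℝ := C₀ + Cγ with hDdef
  have hD : 0 < D := by positivity
  -- uniform bound on the matrix entries
  have key : ∀ m n : ℕ, 1 ≤ m → 1 ≤ n →
      ‖A m n‖ * (m:ℝ) ^ (k:ℝ) ≤ D * (n:ℝ) ^ (g:ℝ) := by
    intro m n hm hn
    have hm1 : (1:ℝ) ≤ (m:ℝ) := by exact_mod_cast hm
    have hn1 : (1:ℝ) ≤ (n:ℝ) := by exact_mod_cast hn
    have hm0 : (0:ℝ) < (m:ℝ) := by linarith
    have hn0 : (0:ℝ) < (n:ℝ) := by linarith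
    have hkg : (k:ℝ) ≤ (g:ℝ) := by exact_mod_cast Nat.le_add_right k _
    rcases le_or_gt n m with h | h
    · have hmn : (n:ℝ) ≤ (m:ℝ) := by exact_mod_cast h
      calc ‖A m n‖ * (m:ℝ) ^ (k:ℝ)
          ≤ (Cγ * (n:ℝ) ^ ((k:ℝ)+1) * (m:ℝ) ^ (-((k:ℝ)+1))) * (m:ℝ) ^ (k:ℝ) := by
            exact mul_le_mul_of_nonneg_right (h₁ m n hm hn h) (Real.rpow_nonneg hm0.le _)
        _ = Cγ * (n:ℝ) ^ ((k:ℝ)+1) * (m:ℝ) ^ (-1:ℝ) := by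
            rw [mul_assoc, mul_assoc, ← Real.rpow_add hm0]; ring_nf
        _ ≤ Cγ * (n:ℝ) ^ ((k:ℝ)+1) * (n:ℝ) ^ (-1:ℝ) := by
            have : (m:ℝ) ^ (-1:ℝ) ≤ (n:ℝ) ^ (-1:ℝ) := by
              rw [Real.rpow_neg_one, Real.rpow_neg_one]
              exact inv_anti₀ hn0 hmn
            exact mul_le_mul_of_nonneg_left this (by positivity)
        _ = Cγ * (n:ℝ) ^ (k:ℝ) := by
            rw [mul_assoc, ← Real.rpow_add hn0]; ring_nf
        _ ≤ D * (n:ℝ) ^ (g:ℝ) := by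
            have h2 : (n:ℝ) ^ (k:ℝ) ≤ (n:ℝ) ^ (g:ℝ) :=
              Real.rpow_le_rpow_of_exponent_le hn1 hkg
            have h3 : Cγ ≤ D := by simp [hDdef]; linarith
            exact mul_le_mul h3 h2 (by positivity) hD.le
    · have hmn : (m:ℝ) ≤ (n:ℝ) := by exact_mod_cast h.le
      calc ‖A m n‖ * (m:ℝ) ^ (k:ℝ)
          ≤ (C₀ * (n:ℝ) ^ γ₀) * (n:ℝ) ^ (k:ℝ) := by
            have h2 : (m:ℝ) ^ (k:ℝ) ≤ (n:ℝ) ^ (k:ℝ) :=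
              Real.rpow_le_rpow hm0.le hmn (by positivity)
            exact mul_le_mul (h₀ m n hm hn h) h2 (by positivity) (by positivity)
        _ = C₀ * (n:ℝ) ^ (γ₀ + (k:ℝ)) := by rw [mul_assoc, ← Real.rpow_add hn0]
        _ ≤ D * (n:ℝ) ^ (g:ℝ) := by
            have h2 : (n:ℝ) ^ (γ₀ + (k:ℝ)) ≤ (n:ℝ) ^ (g:ℝ) := by
              apply Real.rpow_le_rpow_of_exponent_le hn1
              have := Nat.le_ceil γ₀
              push_cast [hgdef]
              linarith
            have h3 : C₀ ≤ D := by simp [hDdef]; linarith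
            exact mul_le_mul h3 h2 (by positivity) hD.le
  -- the comparison series
  have hTsum : Summable (fun n : ℕ => ((n:ℝ)+1) ^ (-2:ℝ)) := by
    have h := (Real.summable_nat_rpow (p := (-2:ℝ))).mpr (by norm_num)
    have := (summable_nat_add_iff (f := fun n : ℕ => (n:ℝ) ^ (-2:ℝ)) 1).mpr h
    simpa using this
  set T : ℝ := ∑' n : ℕ, ((n:ℝ)+1) ^ (-2:ℝ) with hTdef
  have hT : 0 < T := by
    apply Summable.tsum_pos hTsum (fun i => by positivity) 0
    norm_num
  refine ⟨D * T, by positivity, k', fun c S hS => ?_⟩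
  have hS0 : 0 ≤ S := le_trans (by positivity) (hS 1 le_rfl)
  -- per-term bound
  have term : ∀ m n : ℕ, 1 ≤ m → 1 ≤ n →
      ‖A m n * c n‖ * (m:ℝ) ^ (k:ℝ) ≤ D * S * (n:ℝ) ^ (-2:ℝ) := by
    intro m n hm hn
    have hn1 : (1:ℝ) ≤ (n:ℝ) := by exact_mod_cast hn
    have hn0 : (0:ℝ) < (n:ℝ) := by linarith
    have hcn : ‖c n‖ ≤ S * (n:ℝ) ^ (-(k':ℝ)) := by
      have hp : (0:ℝ) < (n:ℝ) ^ (k':ℝ) := Real.rpow_pos_of_pos hn0 _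
      rw [Real.rpow_neg hn0.le, ← div_eq_mul_inv]
      exact (le_div_iff₀ hp).mpr (hS n hn)
    calc ‖A m n * c n‖ * (m:ℝ) ^ (k:ℝ)
        = (‖A m n‖ * (m:ℝ) ^ (k:ℝ)) * ‖c n‖ := by rw [norm_mul]; ring
      _ ≤ (D * (n:ℝ) ^ (g:ℝ)) * (S * (n:ℝ) ^ (-(k':ℝ))) :=
          mul_le_mul (key m n hm hn) hcn (norm_nonneg _) (by positivity)
      _ = D * S * ((n:ℝ) ^ (g:ℝ) * (n:ℝ) ^ (-(k':ℝ))) := by ring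
      _ = D * S * (n:ℝ) ^ (-2:ℝ) := by
          rw [← Real.rpow_add hn0]
          congr 1
          push_cast [hk'def]
          ring_nf
  have hsumm : ∀ m : ℕ, 1 ≤ m →
      Summable (fun n : ℕ => ‖A m (n+1) * c (n+1)‖) := by
    intro m hm
    have hm1 : (1:ℝ) ≤ (m:ℝ) := by exact_mod_cast hm
    refine Summable.of_nonneg_of_le (f := fun n : ℕ => D * S * ((n:ℝ)+1) ^ (-2:ℝ))
      (fun n => norm_nonneg _) ?_ (hTsum.mul_left _)
    intro n
    have h1 : ‖A m (n+1) * c (n+1)‖ ≤ ‖A m (n+1) * c (n+1)‖ * (m:ℝ) ^ (k:ℝ) := by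
      apply le_mul_of_one_le_right (norm_nonneg _)
      exact Real.one_le_rpow hm1 (by positivity)
    refine h1.trans ?_
    have := term m (n+1) hm (by omega)
    push_cast at this ⊢
    exact this
  refine ⟨hsumm, fun m hm => ?_⟩
  have hs := hsumm m hm
  calc ‖∑' n : ℕ, A m (n+1) * c (n+1)‖ * (m:ℝ) ^ (k:ℝ)
      ≤ (∑' n : ℕ, ‖A m (n+1) * c (n+1)‖) * (m:ℝ) ^ (k:ℝ) :=
        mul_le_mul_of_nonneg_right (norm_tsum_le_tsum_norm hs) (by positivity)
    _ = ∑' n : ℕ, ‖A m (n+1) * c (n+1)‖ * (m:ℝ) ^ (k:ℝ) := (tsum_mul_right).symm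
    _ ≤ ∑' n : ℕ, D * S * ((n:ℝ)+1) ^ (-2:ℝ) := by
        apply Summable.tsum_le_tsum _ (hs.mul_right _) (hTsum.mul_left _)
        intro n
        have := term m (n+1) hm (by omega)
        push_cast at this ⊢
        exact this
    _ = D * S * T := tsum_mul_left
    _ = D * T * S := by ring

/-- A matrix with row growth `C₀ n^{γ₀}` for `n > m` and column decay `C_γ n^γ m^{-γ}`
(for every `γ > 0`) for `n ≤ m` defines a continuous operator from the space `𝐬` of
rapidly decreasing sequences into itself. -/
theorem stmt_5 (A : ℕ → ℕ → ℂ)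
    (hA₀ : ∃ γ₀ ≥ (0:ℝ), ∃ C₀ > (0:ℝ), ∀ m n : ℕ, 1 ≤ m → 1 ≤ n → m < n →
      ‖A m n‖ ≤ C₀ * (n:ℝ) ^ γ₀)
    (hA₁ : ∀ γ : ℝ, 0 < γ → ∃ Cγ > (0:ℝ), ∀ m n : ℕ, 1 ≤ m → 1 ≤ n → n ≤ m →
      ‖A m n‖ ≤ Cγ * (n:ℝ) ^ γ * (m:ℝ) ^ (-γ)) :
    (∀ c : ℕ → ℂ,
      (∀ k : ℕ, ∃ S : ℝ, ∀ n : ℕ, 1 ≤ n → ‖c n‖ * (n:ℝ) ^ (k:ℝ) ≤ S) →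
      (∀ m : ℕ, 1 ≤ m → Summable (fun n : ℕ => ‖A m (n+1) * c (n+1)‖)) ∧
      (∀ k : ℕ, ∃ S' : ℝ, ∀ m : ℕ, 1 ≤ m →
        ‖∑' n : ℕ, A m (n+1) * c (n+1)‖ * (m:ℝ) ^ (k:ℝ) ≤ S')) ∧
    (∀ k : ℕ, ∃ K > (0:ℝ), ∃ k' : ℕ, ∀ c : ℕ → ℂ,
      (∀ j : ℕ, ∃ S : ℝ, ∀ n : ℕ, 1 ≤ n → ‖c n‖ * (n:ℝ) ^ (j:ℝ) ≤ S) →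
      ∀ S : ℝ, (∀ n : ℕ, 1 ≤ n → ‖c n‖ * (n:ℝ) ^ (k':ℝ) ≤ S) →
      ∀ m : ℕ, 1 ≤ m →
        ‖∑' n : ℕ, A m (n+1) * c (n+1)‖ * (m:ℝ) ^ (k:ℝ) ≤ K * S) := by
  constructor
  · intro c hc
    constructor
    · obtain ⟨K, hK, k', hmain⟩ := stmt5_aux A hA₀ hA₁ 0
      obtain ⟨S, hS⟩ := hc k'
      exact (hmain c S hS).1
    · intro k
      obtain ⟨K, hK, k', hmain⟩ := stmt5_aux A hA₀ hA₁ k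
      obtain ⟨S, hS⟩ := hc k'
      exact ⟨K * S, (hmain c S hS).2⟩
  · intro k
    obtain ⟨K, hK, k', hmain⟩ := stmt5_aux A hA₀ hA₁ k
    exact ⟨K, hK, k', fun c _ S hS => (hmain c S hS).2⟩
end

section
/- Let ε > 0, γ₁ > 0, C₀ > 0, C₁ > 0, and let (A_{m,n})_{m,n∈ℕ} be a matrix of complex numbers satisfying |A_{m,n}| ≤ C₀·n^{−1−ε} for n > m and |A_{m,n}| ≤ C₁·n^{γ₁}·m^{−γ₁−1−ε} for n ≤ m. Then there exists K > 0 such that for every complex sequence (c_n)_{n≥1} with S := sup_n |c_n|·n^{γ₁} < ∞, each series a_m = Σ_{n=1}^∞ A_{m,n} c_n converges absolutely and sup_m |a_m|·m^{γ₁} ≤ K·S. That is, the matrix operator is continuous from s_{γ₁} into s_{γ₁}. -/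
/-- A matrix with `|A_{m,n}| ≤ C₀ n^{-1-ε}` for `n > m` and
`|A_{m,n}| ≤ C₁ n^{γ₁} m^{-γ₁-1-ε}` for `n ≤ m` defines a continuous operator
from `s_{γ₁}` into `s_{γ₁}`. -/
theorem stmt_6 (ε γ₁ C₀ C₁ : ℝ) (hε : 0 < ε) (hγ₁ : 0 < γ₁)
    (hC₀ : 0 < C₀) (hC₁ : 0 < C₁) (A : ℕ → ℕ → ℂ)
    (hA : ∀ m n : ℕ, 1 ≤ m → 1 ≤ n →
      (m < n → ‖A m n‖ ≤ C₀ * (n:ℝ) ^ (-1 - ε)) ∧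
      (n ≤ m → ‖A m n‖ ≤ C₁ * (n:ℝ) ^ γ₁ * (m:ℝ) ^ (-γ₁ - 1 - ε))) :
    ∃ K > (0:ℝ), ∀ c : ℕ → ℂ, ∀ S : ℝ,
      (∀ n : ℕ, 1 ≤ n → ‖c n‖ * (n:ℝ) ^ γ₁ ≤ S) →
      ∀ m : ℕ, 1 ≤ m →
        Summable (fun n : ℕ => ‖A m (n+1) * c (n+1)‖) ∧
        ‖∑' n : ℕ, A m (n+1) * c (n+1)‖ * (m:ℝ) ^ γ₁ ≤ K * S := by
  have hT : Summable (fun n : ℕ => ((n+1:ℕ):ℝ) ^ (-1 - ε)) := by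
    have := (Real.summable_nat_rpow (p := -1 - ε)).2 (by linarith)
    exact (summable_nat_add_iff 1).2 this
  set T := ∑' n : ℕ, ((n+1:ℕ):ℝ) ^ (-1 - ε) with hTdef
  have hTpos : 0 < T := by
    have h1 : ((0+1:ℕ):ℝ) ^ (-1 - ε) ≤ T :=
      Summable.le_tsum hT 0 (fun i _ => Real.rpow_nonneg (by positivity) _)
    have : (0:ℝ) < ((0+1:ℕ):ℝ) ^ (-1 - ε) := Real.rpow_pos_of_pos (by norm_num) _
    linarith
  refine ⟨(C₀ + C₁) * T, by positivity, ?_⟩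
  intro c S hS m hm
  have hS0 : 0 ≤ S := by
    have := hS 1 le_rfl
    have h1 : (0:ℝ) ≤ ‖c 1‖ * ((1:ℕ):ℝ) ^ γ₁ := by positivity
    linarith
  have hmpos : (0:ℝ) < (m:ℝ) := by exact_mod_cast hm
  have hmγ : (0:ℝ) < (m:ℝ) ^ γ₁ := Real.rpow_pos_of_pos hmpos _
  -- key pointwise bound
  have key : ∀ n : ℕ, ‖A m (n+1) * c (n+1)‖ * (m:ℝ) ^ γ₁ ≤
      (C₀ + C₁) * S * ((n+1:ℕ):ℝ) ^ (-1 - ε) := by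
    intro n
    set N := n + 1 with hN
    have hN1 : 1 ≤ N := Nat.le_add_left 1 n
    have hNpos : (0:ℝ) < (N:ℝ) := by exact_mod_cast hN1
    have hc : ‖c N‖ ≤ S * (N:ℝ) ^ (-γ₁) := by
      have := hS N hN1
      have hNγ : (0:ℝ) < (N:ℝ) ^ γ₁ := Real.rpow_pos_of_pos hNpos _
      rw [Real.rpow_neg hNpos.le, ← div_eq_mul_inv]
      exact (le_div_iff₀ hNγ).2 this
    rw [norm_mul]
    rcases le_or_gt N m with hle | hlt
    · have hAm := (hA m N hm hN1).2 hle
      have hmle : (m:ℝ) ^ (-1 - ε) ≤ (N:ℝ) ^ (-1 - ε) := by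
        apply Real.rpow_le_rpow_of_nonpos hNpos (by exact_mod_cast hle) (by linarith)
      calc ‖A m N‖ * ‖c N‖ * (m:ℝ) ^ γ₁
          ≤ (C₁ * (N:ℝ) ^ γ₁ * (m:ℝ) ^ (-γ₁ - 1 - ε)) * (S * (N:ℝ) ^ (-γ₁)) * (m:ℝ) ^ γ₁ := by
            apply mul_le_mul_of_nonneg_right _ hmγ.le
            exact mul_le_mul hAm hc (norm_nonneg _) (by positivity)
        _ = C₁ * S * ((N:ℝ) ^ γ₁ * (N:ℝ) ^ (-γ₁)) * ((m:ℝ) ^ (-γ₁ - 1 - ε) * (m:ℝ) ^ γ₁) := by ring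
        _ = C₁ * S * (m:ℝ) ^ (-1 - ε) := by
            have e1 : (N:ℝ) ^ γ₁ * (N:ℝ) ^ (-γ₁) = 1 := by
              rw [← Real.rpow_add hNpos]; simp
            have e2 : (m:ℝ) ^ (-γ₁ - 1 - ε) * (m:ℝ) ^ γ₁ = (m:ℝ) ^ (-1 - ε) := by
              rw [← Real.rpow_add hmpos]; ring_nf
            rw [e1, e2]; ring
        _ ≤ C₁ * S * (N:ℝ) ^ (-1 - ε) := by
            apply mul_le_mul_of_nonneg_left hmle (by positivity)
        _ ≤ (C₀ + C₁) * S * (N:ℝ) ^ (-1 - ε) := by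
            apply mul_le_mul_of_nonneg_right _ (Real.rpow_nonneg hNpos.le _)
            nlinarith
    · have hAm := (hA m N hm hN1).1 hlt
      have hmN : (m:ℝ) ^ γ₁ ≤ (N:ℝ) ^ γ₁ := by
        apply Real.rpow_le_rpow hmpos.le (by exact_mod_cast hlt.le) hγ₁.le
      calc ‖A m N‖ * ‖c N‖ * (m:ℝ) ^ γ₁
          ≤ (C₀ * (N:ℝ) ^ (-1 - ε)) * (S * (N:ℝ) ^ (-γ₁)) * (N:ℝ) ^ γ₁ := by
            apply mul_le_mul
            · exact mul_le_mul hAm hc (norm_nonneg _) (by positivity)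
            · exact hmN
            · exact hmγ.le
            · positivity
        _ = C₀ * S * (N:ℝ) ^ (-1 - ε) * ((N:ℝ) ^ (-γ₁) * (N:ℝ) ^ γ₁) := by ring
        _ = C₀ * S * (N:ℝ) ^ (-1 - ε) := by
            have e1 : (N:ℝ) ^ (-γ₁) * (N:ℝ) ^ γ₁ = 1 := by
              rw [← Real.rpow_add hNpos]; simp
            rw [e1]; ring
        _ ≤ (C₀ + C₁) * S * (N:ℝ) ^ (-1 - ε) := by
            apply mul_le_mul_of_nonneg_right _ (Real.rpow_nonneg hNpos.le _)
            nlinarith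
  have hsum : Summable (fun n : ℕ => ‖A m (n+1) * c (n+1)‖) := by
    refine Summable.of_nonneg_of_le (fun n => norm_nonneg _) (fun n => ?_)
      (hT.mul_left ((C₀ + C₁) * S / (m:ℝ) ^ γ₁))
    rw [div_mul_eq_mul_div, le_div_iff₀ hmγ]
    exact key n
  refine ⟨hsum, ?_⟩
  calc ‖∑' n : ℕ, A m (n+1) * c (n+1)‖ * (m:ℝ) ^ γ₁
      ≤ (∑' n : ℕ, ‖A m (n+1) * c (n+1)‖) * (m:ℝ) ^ γ₁ := by
        apply mul_le_mul_of_nonneg_right (norm_tsum_le_tsum_norm hsum) hmγ.le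
    _ = ∑' n : ℕ, ‖A m (n+1) * c (n+1)‖ * (m:ℝ) ^ γ₁ := (tsum_mul_right).symm
    _ ≤ ∑' n : ℕ, (C₀ + C₁) * S * ((n+1:ℕ):ℝ) ^ (-1 - ε) := by
        apply Summable.tsum_le_tsum key (hsum.mul_right _) ((hT.mul_left _))
    _ = (C₀ + C₁) * T * S := by rw [tsum_mul_left]; ring
end

section
/- Let β ∈ (0,1], γ₀ ≥ 0, γ₁ > 0, C₀ > 0, C₁ > 0, and let (A_{m,n})_{m,n∈ℕ} be a matrix of complex numbers satisfying |A_{m,n}| ≤ C₀·e^{γ₀ n^β} for n > m and |A_{m,n}| ≤ C₁·e^{−γ₁(m^β − n^β)} for n ≤ m. Then for every ε ∈ (0,1) there exists K > 0 such that: for every complex sequence (c_n)_{n≥1} with S := sup_n |c_n|·e^{(γ₁+γ₀+ε) n^β} < ∞, the series a_m = Σ_{n=1}^∞ A_{m,n} c_n converges absolutely for each m, and sup_m |a_m|·e^{γ₁ m^β} ≤ K·S. That is, the matrix operator is continuous from 𝔰^β_{γ₁+γ₀+ε} into 𝔰^β_{γ₁}. -/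
open Filter Real

lemma aux_summable {β ε : ℝ} (hβ : 0 < β) (hε : 0 < ε) :
    Summable (fun n : ℕ => Real.exp (-ε * (n:ℝ) ^ β)) := by
  have h1 : Tendsto (fun n : ℕ => (n:ℝ) ^ β) atTop atTop :=
    (tendsto_rpow_atTop hβ).comp tendsto_natCast_atTop_atTop
  have h2 := (isLittleO_exp_neg_mul_rpow_atTop hε (-2/β)).comp_tendsto h1
  have h3 : (fun n : ℕ => Real.exp (-ε * (n:ℝ) ^ β)) =O[atTop]
      (fun n : ℕ => (n:ℝ) ^ (-2:ℝ)) := by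
    refine h2.isBigO.congr' .rfl ?_
    filter_upwards with n
    show ((n:ℝ) ^ β) ^ (-2/β) = (n:ℝ) ^ (-2:ℝ)
    rw [← Real.rpow_mul (Nat.cast_nonneg n), mul_div_cancel₀ _ hβ.ne']
  exact summable_of_isBigO_nat (Real.summable_nat_rpow.2 (by norm_num)) h3

/-- A matrix with `|A_{m,n}| ≤ C₀ e^{γ₀ n^β}` for `n > m` and
`|A_{m,n}| ≤ C₁ e^{-γ₁(m^β - n^β)}` for `n ≤ m` defines a continuous operator
from `𝔰^β_{γ₁+γ₀+ε}` into `𝔰^β_{γ₁}` for every `ε ∈ (0,1)`. -/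
theorem stmt_7 (β γ₀ γ₁ C₀ C₁ : ℝ) (hβ₀ : 0 < β) (hβ₁ : β ≤ 1)
    (hγ₀ : 0 ≤ γ₀) (hγ₁ : 0 < γ₁) (hC₀ : 0 < C₀) (hC₁ : 0 < C₁)
    (A : ℕ → ℕ → ℂ)
    (hA : ∀ m n : ℕ, 1 ≤ m → 1 ≤ n →
      (m < n → ‖A m n‖ ≤ C₀ * Real.exp (γ₀ * (n:ℝ) ^ β)) ∧
      (n ≤ m → ‖A m n‖ ≤ C₁ * Real.exp (-γ₁ * ((m:ℝ) ^ β - (n:ℝ) ^ β)))) :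
    ∀ ε : ℝ, 0 < ε → ε < 1 → ∃ K > (0:ℝ), ∀ c : ℕ → ℂ, ∀ S : ℝ,
      (∀ n : ℕ, 1 ≤ n → ‖c n‖ * Real.exp ((γ₁ + γ₀ + ε) * (n:ℝ) ^ β) ≤ S) →
      ∀ m : ℕ, 1 ≤ m →
        Summable (fun n : ℕ => ‖A m (n+1) * c (n+1)‖) ∧
        ‖∑' n : ℕ, A m (n+1) * c (n+1)‖ * Real.exp (γ₁ * (m:ℝ) ^ β) ≤ K * S := by
  intro ε hε0 hε1
  have hsum : Summable (fun n : ℕ => Real.exp (-ε * ((n:ℝ)+1) ^ β)) := by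
    have h := (summable_nat_add_iff 1).mpr (aux_summable hβ₀ hε0)
    refine h.congr fun n => ?_
    push_cast
    ring_nf
  set T := ∑' n : ℕ, Real.exp (-ε * ((n:ℝ)+1) ^ β) with hTdef
  have hT : 0 < T := Summable.tsum_pos hsum (fun n => (Real.exp_pos _).le) 0 (Real.exp_pos _)
  refine ⟨(C₀ + C₁) * T, by positivity, ?_⟩
  intro c S hS m hm
  have hS0 : 0 ≤ S := le_trans (by positivity) (hS 1 le_rfl)
  have hmpow : (0:ℝ) ≤ (m:ℝ) ^ β := Real.rpow_nonneg (Nat.cast_nonneg m) β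
  -- termwise bound
  have key : ∀ n : ℕ, ‖A m (n+1) * c (n+1)‖ ≤
      (C₀ + C₁) * S * Real.exp (-γ₁ * (m:ℝ) ^ β) * Real.exp (-ε * ((n:ℝ)+1) ^ β) := by
    intro n
    have hn1 : 1 ≤ n + 1 := Nat.succ_le_succ (Nat.zero_le n)
    have hnc : ((n+1:ℕ):ℝ) = (n:ℝ) + 1 := by push_cast; ring
    have hnpow : (0:ℝ) ≤ ((n:ℝ)+1) ^ β := Real.rpow_nonneg (by positivity) β
    have hc : ‖c (n+1)‖ ≤ S * Real.exp (-((γ₁ + γ₀ + ε) * ((n:ℝ)+1) ^ β)) := by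
      have h := hS (n+1) hn1
      rw [hnc] at h
      rw [Real.exp_neg, ← div_eq_mul_inv, le_div_iff₀ (Real.exp_pos _)]
      exact h
    rw [norm_mul]
    rcases le_or_gt (n+1) m with hle | hlt
    · have hAb := (hA m (n+1) hm hn1).2 hle
      rw [hnc] at hAb
      calc ‖A m (n+1)‖ * ‖c (n+1)‖
          ≤ (C₁ * Real.exp (-γ₁ * ((m:ℝ) ^ β - ((n:ℝ)+1) ^ β))) *
            (S * Real.exp (-((γ₁ + γ₀ + ε) * ((n:ℝ)+1) ^ β))) :=
            mul_le_mul hAb hc (norm_nonneg _) (by positivity)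
        _ = C₁ * S * Real.exp ((-γ₁ * ((m:ℝ) ^ β - ((n:ℝ)+1) ^ β))
              + (-((γ₁ + γ₀ + ε) * ((n:ℝ)+1) ^ β))) := by rw [Real.exp_add]; ring
        _ ≤ (C₀ + C₁) * S * Real.exp ((-γ₁ * (m:ℝ) ^ β) + (-ε * ((n:ℝ)+1) ^ β)) := by
            have hexp : Real.exp ((-γ₁ * ((m:ℝ) ^ β - ((n:ℝ)+1) ^ β))
                + (-((γ₁ + γ₀ + ε) * ((n:ℝ)+1) ^ β)))
                ≤ Real.exp ((-γ₁ * (m:ℝ) ^ β) + (-ε * ((n:ℝ)+1) ^ β)) := by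
              apply Real.exp_le_exp.2
              nlinarith [mul_nonneg hγ₀ hnpow]
            have h1 : C₁ * S ≤ (C₀ + C₁) * S := by nlinarith
            calc C₁ * S * Real.exp _
                ≤ C₁ * S * Real.exp ((-γ₁ * (m:ℝ) ^ β) + (-ε * ((n:ℝ)+1) ^ β)) :=
                  mul_le_mul_of_nonneg_left hexp (by positivity)
              _ ≤ (C₀ + C₁) * S * Real.exp ((-γ₁ * (m:ℝ) ^ β) + (-ε * ((n:ℝ)+1) ^ β)) :=
                  mul_le_mul_of_nonneg_right h1 (Real.exp_pos _).le
        _ = (C₀ + C₁) * S * Real.exp (-γ₁ * (m:ℝ) ^ β) * Real.exp (-ε * ((n:ℝ)+1) ^ β) := by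
            rw [Real.exp_add]; ring
    · have hAb := (hA m (n+1) hm hn1).1 hlt
      rw [hnc] at hAb
      have hmn : (m:ℝ) ^ β ≤ ((n:ℝ)+1) ^ β := by
        apply Real.rpow_le_rpow (Nat.cast_nonneg m) _ hβ₀.le
        have h2 : (m:ℝ) ≤ ((n+1:ℕ):ℝ) := Nat.cast_le.2 hlt.le
        rwa [hnc] at h2
      calc ‖A m (n+1)‖ * ‖c (n+1)‖
          ≤ (C₀ * Real.exp (γ₀ * ((n:ℝ)+1) ^ β)) *
            (S * Real.exp (-((γ₁ + γ₀ + ε) * ((n:ℝ)+1) ^ β))) :=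
            mul_le_mul hAb hc (norm_nonneg _) (by positivity)
        _ = C₀ * S * Real.exp ((γ₀ * ((n:ℝ)+1) ^ β)
              + (-((γ₁ + γ₀ + ε) * ((n:ℝ)+1) ^ β))) := by rw [Real.exp_add]; ring
        _ ≤ (C₀ + C₁) * S * Real.exp ((-γ₁ * (m:ℝ) ^ β) + (-ε * ((n:ℝ)+1) ^ β)) := by
            have hexp : Real.exp ((γ₀ * ((n:ℝ)+1) ^ β)
                + (-((γ₁ + γ₀ + ε) * ((n:ℝ)+1) ^ β)))
                ≤ Real.exp ((-γ₁ * (m:ℝ) ^ β) + (-ε * ((n:ℝ)+1) ^ β)) := by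
              apply Real.exp_le_exp.2
              nlinarith [mul_le_mul_of_nonneg_left hmn hγ₁.le]
            have h1 : C₀ * S ≤ (C₀ + C₁) * S := by nlinarith
            calc C₀ * S * Real.exp _
                ≤ C₀ * S * Real.exp ((-γ₁ * (m:ℝ) ^ β) + (-ε * ((n:ℝ)+1) ^ β)) :=
                  mul_le_mul_of_nonneg_left hexp (by positivity)
              _ ≤ (C₀ + C₁) * S * Real.exp ((-γ₁ * (m:ℝ) ^ β) + (-ε * ((n:ℝ)+1) ^ β)) :=
                  mul_le_mul_of_nonneg_right h1 (Real.exp_pos _).le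
        _ = (C₀ + C₁) * S * Real.exp (-γ₁ * (m:ℝ) ^ β) * Real.exp (-ε * ((n:ℝ)+1) ^ β) := by
            rw [Real.exp_add]; ring
  have hsumB : Summable (fun n : ℕ =>
      (C₀ + C₁) * S * Real.exp (-γ₁ * (m:ℝ) ^ β) * Real.exp (-ε * ((n:ℝ)+1) ^ β)) :=
    hsum.mul_left _
  have hsum2 : Summable (fun n : ℕ => ‖A m (n+1) * c (n+1)‖) :=
    Summable.of_nonneg_of_le (fun n => norm_nonneg _) key hsumB
  refine ⟨hsum2, ?_⟩
  have hb : ‖∑' n : ℕ, A m (n+1) * c (n+1)‖ ≤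
      (C₀ + C₁) * S * Real.exp (-γ₁ * (m:ℝ) ^ β) * T := by
    calc ‖∑' n : ℕ, A m (n+1) * c (n+1)‖ ≤ ∑' n : ℕ, ‖A m (n+1) * c (n+1)‖ :=
          norm_tsum_le_tsum_norm hsum2
      _ ≤ ∑' n : ℕ, (C₀ + C₁) * S * Real.exp (-γ₁ * (m:ℝ) ^ β) *
            Real.exp (-ε * ((n:ℝ)+1) ^ β) := Summable.tsum_le_tsum key hsum2 hsumB
      _ = (C₀ + C₁) * S * Real.exp (-γ₁ * (m:ℝ) ^ β) * T := tsum_mul_left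
  calc ‖∑' n : ℕ, A m (n+1) * c (n+1)‖ * Real.exp (γ₁ * (m:ℝ) ^ β)
      ≤ ((C₀ + C₁) * S * Real.exp (-γ₁ * (m:ℝ) ^ β) * T) * Real.exp (γ₁ * (m:ℝ) ^ β) :=
        mul_le_mul_of_nonneg_right hb (Real.exp_pos _).le
    _ = (C₀ + C₁) * T * S * (Real.exp (-γ₁ * (m:ℝ) ^ β) * Real.exp (γ₁ * (m:ℝ) ^ β)) := by ring
    _ = (C₀ + C₁) * T * S := by
        rw [← Real.exp_add, show -γ₁ * (m:ℝ) ^ β + γ₁ * (m:ℝ) ^ β = 0 by ring,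
          Real.exp_zero, mul_one]
end

section
/- Let β ∈ (0,1] and let (A_{m,n})_{m,n∈ℕ} be a matrix of complex numbers such that there exist C₀ > 0 and γ₀ ≥ 0 with |A_{m,n}| ≤ C₀·e^{γ₀ n^β} for all n > m, and for every γ > 0 there exists C_γ > 0 with |A_{m,n}| ≤ C_γ·e^{γ(n^β − m^β)} for all n ≤ m. Then for every complex sequence (c_n)_{n≥1} with sup_n |c_n|·e^{k n^β} < ∞ for every k ∈ ℕ, each series a_m = Σ_{n=1}^∞ A_{m,n} c_n converges absolutely and the sequence (a_m)_{m≥1} satisfies sup_m |a_m|·e^{k m^β} < ∞ for every k ∈ ℕ; moreover, for every k ∈ ℕ there exist K > 0 and k' ∈ ℕ such that sup_m |a_m|·e^{k m^β} ≤ K·sup_n |c_n|·e^{k' n^β}. That is, the matrix operator is a continuous operator from 𝔰^β into 𝔰^β. -/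
private lemma sum_inv_sq_summable : Summable (fun n : ℕ => 1 / ((n:ℝ)+1)^2) := by
  have h := Real.summable_one_div_nat_pow.mpr (le_refl 2)
  have h2 := (summable_nat_add_iff 1).mpr h
  simpa using h2

private lemma key_lemma (β : ℝ) (hβ₀ : 0 < β) (A : ℕ → ℕ → ℂ)
    (hA₀ : ∃ γ₀ ≥ (0:ℝ), ∃ C₀ > (0:ℝ), ∀ m n : ℕ, 1 ≤ m → 1 ≤ n → m < n →
      ‖A m n‖ ≤ C₀ * Real.exp (γ₀ * (n:ℝ) ^ β))
    (hA₁ : ∀ γ : ℝ, 0 < γ → ∃ Cγ > (0:ℝ), ∀ m n : ℕ, 1 ≤ m → 1 ≤ n → n ≤ m →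
      ‖A m n‖ ≤ Cγ * Real.exp (γ * ((n:ℝ) ^ β - (m:ℝ) ^ β))) (k : ℕ) :
    ∃ K > (0:ℝ), ∃ k' : ℕ, ∀ c : ℕ → ℂ, ∀ S : ℝ,
      (∀ n : ℕ, 1 ≤ n → ‖c n‖ * Real.exp ((k':ℝ) * (n:ℝ) ^ β) ≤ S) →
      ∀ m : ℕ, 1 ≤ m →
        Summable (fun n : ℕ => ‖A m (n+1) * c (n+1)‖) ∧
        ‖∑' n : ℕ, A m (n+1) * c (n+1)‖ * Real.exp ((k:ℝ) * (m:ℝ) ^ β) ≤ K * S := by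
  obtain ⟨γ₀, hγ₀, C₀, hC₀, h₀⟩ := hA₀
  obtain ⟨C₁, hC₁, h₁⟩ := hA₁ ((k:ℝ)+1) (by positivity)
  set C' : ℝ := max C₀ C₁ with hC'def
  have hC' : 0 < C' := lt_max_iff.mpr (Or.inl hC₀)
  set G : ℕ := ⌈γ₀⌉₊ + k + 1 with hGdef
  set T : ℕ := ⌈2/β⌉₊ with hTdef
  have hTβ : 2 ≤ (T:ℝ) * β := by
    have h1 : 2/β ≤ (T:ℝ) := Nat.le_ceil _
    calc (2:ℝ) = (2/β) * β := by field_simp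
    _ ≤ (T:ℝ) * β := mul_le_mul_of_nonneg_right h1 hβ₀.le
  set TS : ℝ := ∑' n : ℕ, 1 / ((n:ℝ)+1)^2 with hTSdef
  have hTS : 0 < TS := by
    refine Summable.tsum_pos sum_inv_sq_summable (fun n => by positivity) 0 (by norm_num)
  refine ⟨C' * TS, by positivity, G + T, ?_⟩
  intro c S hS m hm
  have hSnn : 0 ≤ S := le_trans (by positivity) (hS 1 le_rfl)
  have hmpos : (0:ℝ) < (m:ℝ) := by exact_mod_cast hm
  -- pointwise bound
  have hbound : ∀ n : ℕ, ‖A m (n+1) * c (n+1)‖ * Real.exp ((k:ℝ) * (m:ℝ)^β)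
      ≤ C' * S * (1 / ((n:ℝ)+1)^2) := by
    intro n
    set N : ℕ := n + 1 with hNdef
    have hN : 1 ≤ N := Nat.succ_le_succ n.zero_le
    have hNpos : (0:ℝ) < (N:ℝ) := by exact_mod_cast hN
    have hxpos : (0:ℝ) < (N:ℝ)^β := Real.rpow_pos_of_pos hNpos β
    have hmx : (0:ℝ) ≤ (m:ℝ)^β := (Real.rpow_pos_of_pos hmpos β).le
    -- bound on A
    have hA : ‖A m N‖ * Real.exp ((k:ℝ) * (m:ℝ)^β) ≤ C' * Real.exp ((G:ℝ) * (N:ℝ)^β) := by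
      rcases le_or_gt N m with hle | hlt
      · have hb := h₁ m N hm hN hle
        calc ‖A m N‖ * Real.exp ((k:ℝ) * (m:ℝ)^β)
            ≤ (C₁ * Real.exp (((k:ℝ)+1) * ((N:ℝ)^β - (m:ℝ)^β))) * Real.exp ((k:ℝ) * (m:ℝ)^β) :=
              mul_le_mul_of_nonneg_right hb (Real.exp_pos _).le
          _ = C₁ * Real.exp (((k:ℝ)+1) * (N:ℝ)^β - (m:ℝ)^β) := by
              rw [mul_assoc, ← Real.exp_add]; ring_nf
          _ ≤ C' * Real.exp ((G:ℝ) * (N:ℝ)^β) := by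
              apply mul_le_mul (le_max_right _ _) _ (Real.exp_pos _).le hC'.le
              apply Real.exp_le_exp.mpr
              have hG : (k:ℝ) + 1 ≤ (G:ℝ) := by
                have : ((k:ℕ):ℝ) + 1 ≤ ((⌈γ₀⌉₊ + k + 1 : ℕ) : ℝ) := by
                  push_cast; have : (0:ℝ) ≤ (⌈γ₀⌉₊ : ℝ) := Nat.cast_nonneg _; linarith
                simpa [hGdef] using this
              nlinarith
      · have hb := h₀ m N hm hN hlt
        have hmn : (m:ℝ)^β ≤ (N:ℝ)^β :=
          Real.rpow_le_rpow hmpos.le (by exact_mod_cast hlt.le) hβ₀.le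
        calc ‖A m N‖ * Real.exp ((k:ℝ) * (m:ℝ)^β)
            ≤ (C₀ * Real.exp (γ₀ * (N:ℝ)^β)) * Real.exp ((k:ℝ) * (m:ℝ)^β) :=
              mul_le_mul_of_nonneg_right hb (Real.exp_pos _).le
          _ = C₀ * Real.exp (γ₀ * (N:ℝ)^β + (k:ℝ) * (m:ℝ)^β) := by
              rw [mul_assoc, ← Real.exp_add]
          _ ≤ C' * Real.exp ((G:ℝ) * (N:ℝ)^β) := by
              apply mul_le_mul (le_max_left _ _) _ (Real.exp_pos _).le hC'.le
              apply Real.exp_le_exp.mpr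
              have hG : γ₀ + (k:ℝ) ≤ (G:ℝ) := by
                have h1 : γ₀ ≤ (⌈γ₀⌉₊ : ℝ) := Nat.le_ceil _
                have : ((⌈γ₀⌉₊ + k + 1 : ℕ) : ℝ) = (⌈γ₀⌉₊:ℝ) + (k:ℝ) + 1 := by push_cast; ring
                rw [hGdef]; rw [this]; linarith
              nlinarith [mul_le_mul_of_nonneg_right hmn (Nat.cast_nonneg k : (0:ℝ) ≤ (k:ℝ))]
    -- bound on c
    have hc : ‖c N‖ ≤ S * Real.exp (-(((G:ℝ)+(T:ℝ)) * (N:ℝ)^β)) := by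
      have h2 := hS N hN
      have hcast : ((G + T : ℕ) : ℝ) = (G:ℝ) + (T:ℝ) := by push_cast; ring
      rw [hcast] at h2
      calc ‖c N‖ = ‖c N‖ * Real.exp (((G:ℝ)+(T:ℝ)) * (N:ℝ)^β)
            * Real.exp (-(((G:ℝ)+(T:ℝ)) * (N:ℝ)^β)) := by
            rw [mul_assoc, ← Real.exp_add, add_neg_cancel, Real.exp_zero, mul_one]
        _ ≤ S * Real.exp (-(((G:ℝ)+(T:ℝ)) * (N:ℝ)^β)) :=
            mul_le_mul_of_nonneg_right h2 (Real.exp_pos _).le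
    -- decay bound
    have hdecay : Real.exp ((G:ℝ) * (N:ℝ)^β) * Real.exp (-(((G:ℝ)+(T:ℝ)) * (N:ℝ)^β))
        ≤ 1 / ((N:ℝ))^2 := by
      rw [← Real.exp_add]
      have he : (G:ℝ) * (N:ℝ)^β + -(((G:ℝ)+(T:ℝ)) * (N:ℝ)^β) = -((T:ℝ) * (N:ℝ)^β) := by ring
      rw [he]
      have hlogN : 0 ≤ Real.log N := Real.log_nonneg (by exact_mod_cast hN)
      have h1 : β * Real.log N ≤ (N:ℝ)^β := by
        have := Real.log_le_sub_one_of_pos hxpos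
        rw [Real.log_rpow hNpos] at this
        linarith
      have h2 : 2 * Real.log N ≤ (T:ℝ) * (N:ℝ)^β := by
        nlinarith [(Nat.cast_nonneg T : (0:ℝ) ≤ (T:ℝ))]
      have h3 : Real.exp (-((T:ℝ) * (N:ℝ)^β)) ≤ Real.exp (-(2 * Real.log N)) :=
        Real.exp_le_exp.mpr (by linarith)
      have h4 : Real.exp (-(2 * Real.log N)) = 1 / ((N:ℝ))^2 := by
        rw [Real.exp_neg, show (2:ℝ) * Real.log N = Real.log N + Real.log N by ring,
          Real.exp_add, Real.exp_log hNpos, one_div]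
        norm_num [sq]
      rw [← h4]; exact h3
    have hcastN : ((N:ℝ)) = (n:ℝ) + 1 := by push_cast [hNdef]; ring
    calc ‖A m N * c N‖ * Real.exp ((k:ℝ) * (m:ℝ)^β)
        = (‖A m N‖ * Real.exp ((k:ℝ) * (m:ℝ)^β)) * ‖c N‖ := by
          rw [norm_mul]; ring
      _ ≤ (C' * Real.exp ((G:ℝ) * (N:ℝ)^β)) * (S * Real.exp (-(((G:ℝ)+(T:ℝ)) * (N:ℝ)^β))) := by
          apply mul_le_mul hA hc (norm_nonneg _)
          positivity
      _ = C' * S * (Real.exp ((G:ℝ) * (N:ℝ)^β) * Real.exp (-(((G:ℝ)+(T:ℝ)) * (N:ℝ)^β))) := by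
          ring
      _ ≤ C' * S * (1 / ((N:ℝ))^2) := by
          apply mul_le_mul_of_nonneg_left hdecay (by positivity)
      _ = C' * S * (1 / ((n:ℝ)+1)^2) := by rw [hcastN]
  -- summability
  have hE : (0:ℝ) < Real.exp ((k:ℝ) * (m:ℝ)^β) := Real.exp_pos _
  have hsum : Summable (fun n : ℕ => ‖A m (n+1) * c (n+1)‖) := by
    apply Summable.of_nonneg_of_le (fun n => norm_nonneg _)
      (fun n => (le_div_iff₀ hE).mpr (hbound n))
    exact (sum_inv_sq_summable.mul_left (C' * S)).div_const _
  refine ⟨hsum, ?_⟩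
  have h1 : ‖∑' n : ℕ, A m (n+1) * c (n+1)‖ ≤ ∑' n : ℕ, ‖A m (n+1) * c (n+1)‖ :=
    norm_tsum_le_tsum_norm hsum
  calc ‖∑' n : ℕ, A m (n+1) * c (n+1)‖ * Real.exp ((k:ℝ) * (m:ℝ)^β)
      ≤ (∑' n : ℕ, ‖A m (n+1) * c (n+1)‖) * Real.exp ((k:ℝ) * (m:ℝ)^β) :=
        mul_le_mul_of_nonneg_right h1 hE.le
    _ = ∑' n : ℕ, ‖A m (n+1) * c (n+1)‖ * Real.exp ((k:ℝ) * (m:ℝ)^β) := tsum_mul_right.symm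
    _ ≤ ∑' n : ℕ, C' * S * (1 / ((n:ℝ)+1)^2) :=
        Summable.tsum_le_tsum hbound (hsum.mul_right _) (sum_inv_sq_summable.mul_left (C' * S))
    _ = C' * S * TS := tsum_mul_left
    _ = C' * TS * S := by ring

/-- A matrix with `|A_{m,n}| ≤ C₀ e^{γ₀ n^β}` for `n > m` and, for every `γ > 0`,
`|A_{m,n}| ≤ C_γ e^{γ(n^β - m^β)}` for `n ≤ m`, defines a continuous operator from
the space `𝔰^β` into itself. -/
theorem stmt_8 (β : ℝ) (hβ₀ : 0 < β) (hβ₁ : β ≤ 1) (A : ℕ → ℕ → ℂ)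
    (hA₀ : ∃ γ₀ ≥ (0:ℝ), ∃ C₀ > (0:ℝ), ∀ m n : ℕ, 1 ≤ m → 1 ≤ n → m < n →
      ‖A m n‖ ≤ C₀ * Real.exp (γ₀ * (n:ℝ) ^ β))
    (hA₁ : ∀ γ : ℝ, 0 < γ → ∃ Cγ > (0:ℝ), ∀ m n : ℕ, 1 ≤ m → 1 ≤ n → n ≤ m →
      ‖A m n‖ ≤ Cγ * Real.exp (γ * ((n:ℝ) ^ β - (m:ℝ) ^ β))) :
    (∀ c : ℕ → ℂ,
      (∀ k : ℕ, ∃ S : ℝ, ∀ n : ℕ, 1 ≤ n → ‖c n‖ * Real.exp ((k:ℝ) * (n:ℝ) ^ β) ≤ S) →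
      (∀ m : ℕ, 1 ≤ m → Summable (fun n : ℕ => ‖A m (n+1) * c (n+1)‖)) ∧
      (∀ k : ℕ, ∃ S' : ℝ, ∀ m : ℕ, 1 ≤ m →
        ‖∑' n : ℕ, A m (n+1) * c (n+1)‖ * Real.exp ((k:ℝ) * (m:ℝ) ^ β) ≤ S')) ∧
    (∀ k : ℕ, ∃ K > (0:ℝ), ∃ k' : ℕ, ∀ c : ℕ → ℂ,
      (∀ j : ℕ, ∃ S : ℝ, ∀ n : ℕ, 1 ≤ n → ‖c n‖ * Real.exp ((j:ℝ) * (n:ℝ) ^ β) ≤ S) →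
      ∀ S : ℝ, (∀ n : ℕ, 1 ≤ n → ‖c n‖ * Real.exp ((k':ℝ) * (n:ℝ) ^ β) ≤ S) →
      ∀ m : ℕ, 1 ≤ m →
        ‖∑' n : ℕ, A m (n+1) * c (n+1)‖ * Real.exp ((k:ℝ) * (m:ℝ) ^ β) ≤ K * S) := by
  constructor
  · intro c hc
    constructor
    · intro m hm
      obtain ⟨K, hK, k', hkey⟩ := key_lemma β hβ₀ A hA₀ hA₁ 0
      obtain ⟨S, hS⟩ := hc k'
      exact (hkey c S hS m hm).1
    · intro k
      obtain ⟨K, hK, k', hkey⟩ := key_lemma β hβ₀ A hA₀ hA₁ k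
      obtain ⟨S, hS⟩ := hc k'
      exact ⟨K * S, fun m hm => (hkey c S hS m hm).2⟩
  · intro k
    obtain ⟨K, hK, k', hkey⟩ := key_lemma β hβ₀ A hA₀ hA₁ k
    exact ⟨K, hK, k', fun c _ S hS m hm => (hkey c S hS m hm).2⟩
end

section
/- Let β ∈ (0,1], and let ε > 0, γ₁ > 0, C₀ > 0, C₁ > 0. Let (A_{m,n})_{m,n∈ℕ} be a matrix of complex numbers satisfying |A_{m,n}| ≤ C₀·e^{−ε n^β} for n > m and |A_{m,n}| ≤ C₁·e^{γ₁ n^β}·e^{−(γ₁+ε) m^β} for n ≤ m. Then there exists K > 0 such that for every complex sequence (c_n)_{n≥1} with S := sup_n |c_n|·e^{γ₁ n^β} < ∞, each series a_m = Σ_{n=1}^∞ A_{m,n} c_n converges absolutely and sup_m |a_m|·e^{γ₁ m^β} ≤ K·S. That is, the matrix operator is continuous from 𝔰^β_{γ₁} into 𝔰^β_{γ₁}. -/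
open Real

lemma aux_summable_exp (β ε : ℝ) (hβ : 0 < β) (hε : 0 < ε) :
    Summable (fun n : ℕ => Real.exp (-ε * ((n : ℝ) + 1) ^ β)) := by
  set k : ℕ := ⌈2 / β⌉₊ with hk
  have hβk : 2 ≤ β * (k : ℝ) := by
    have h1 : (2 / β : ℝ) ≤ (k : ℝ) := Nat.le_ceil _
    calc (2:ℝ) = β * (2 / β) := by field_simp
      _ ≤ β * k := by nlinarith
  have hsum : Summable (fun n : ℕ => (((Nat.factorial k) : ℝ) / ε ^ k) * (1 / ((n : ℝ) + 1) ^ 2)) := by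
    apply Summable.mul_left
    have h := (summable_nat_add_iff 1).2 (Real.summable_one_div_nat_pow.2 one_lt_two)
    simpa [Nat.cast_add] using h
  refine Summable.of_nonneg_of_le (fun n => (Real.exp_pos _).le) (fun n => ?_) hsum
  set x : ℝ := ε * ((n : ℝ) + 1) ^ β with hx
  have hn1 : (1 : ℝ) ≤ (n : ℝ) + 1 := by have := Nat.cast_nonneg (α := ℝ) n; linarith
  have hb : (0 : ℝ) < ((n : ℝ) + 1) ^ β := Real.rpow_pos_of_pos (by positivity) β
  have hx0 : 0 < x := by positivity
  have h1 : x ^ k / (Nat.factorial k) ≤ Real.exp x := Real.pow_div_factorial_le_exp _ hx0.le k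
  have hxk : 0 < x ^ k / ((Nat.factorial k) : ℝ) := by positivity
  have h2 : Real.exp (-x) ≤ ((Nat.factorial k) : ℝ) / x ^ k := by
    rw [Real.exp_neg]
    rw [inv_le_comm₀ (Real.exp_pos x) (by positivity)]
    calc (((Nat.factorial k) : ℝ) / x ^ k)⁻¹ = x ^ k / (Nat.factorial k) := by rw [inv_div]
      _ ≤ Real.exp x := h1
  have h3 : ε ^ k * ((n : ℝ) + 1) ^ 2 ≤ x ^ k := by
    rw [hx, mul_pow]
    have : (((n : ℝ) + 1) ^ β) ^ k = ((n : ℝ) + 1) ^ (β * (k : ℝ)) := by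
      rw [← Real.rpow_natCast (((n : ℝ) + 1) ^ β) k, ← Real.rpow_mul (by positivity)]
    rw [this]
    have h4 : ((n : ℝ) + 1) ^ (2 : ℝ) ≤ ((n : ℝ) + 1) ^ (β * (k : ℝ)) :=
      Real.rpow_le_rpow_of_exponent_le hn1 hβk
    have h5 : ((n : ℝ) + 1) ^ (2 : ℝ) = ((n : ℝ) + 1) ^ (2 : ℕ) := by
      rw [← Real.rpow_natCast]; norm_num
    rw [h5] at h4
    have hε' : (0:ℝ) ≤ ε ^ k := by positivity
    exact mul_le_mul_of_nonneg_left h4 hε'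
  calc Real.exp (-ε * ((n : ℝ) + 1) ^ β) = Real.exp (-x) := by rw [hx]; ring_nf
    _ ≤ ((Nat.factorial k) : ℝ) / x ^ k := h2
    _ ≤ ((Nat.factorial k) : ℝ) / (ε ^ k * ((n : ℝ) + 1) ^ 2) := by
        apply div_le_div_of_nonneg_left (by positivity) (by positivity) h3
    _ = (((Nat.factorial k) : ℝ) / ε ^ k) * (1 / ((n : ℝ) + 1) ^ 2) := by field_simp

/-- A matrix with `|A_{m,n}| ≤ C₀ e^{-ε n^β}` for `n > m` and
`|A_{m,n}| ≤ C₁ e^{γ₁ n^β} e^{-(γ₁+ε) m^β}` for `n ≤ m` defines a continuous operator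
from `𝔰^β_{γ₁}` into `𝔰^β_{γ₁}`. -/
theorem stmt_9 (β ε γ₁ C₀ C₁ : ℝ) (hβ₀ : 0 < β) (hβ₁ : β ≤ 1) (hε : 0 < ε)
    (hγ₁ : 0 < γ₁) (hC₀ : 0 < C₀) (hC₁ : 0 < C₁) (A : ℕ → ℕ → ℂ)
    (hA : ∀ m n : ℕ, 1 ≤ m → 1 ≤ n →
      (m < n → ‖A m n‖ ≤ C₀ * Real.exp (-ε * (n:ℝ) ^ β)) ∧
      (n ≤ m → ‖A m n‖ ≤
        C₁ * Real.exp (γ₁ * (n:ℝ) ^ β) * Real.exp (-(γ₁ + ε) * (m:ℝ) ^ β))) :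
    ∃ K > (0:ℝ), ∀ c : ℕ → ℂ, ∀ S : ℝ,
      (∀ n : ℕ, 1 ≤ n → ‖c n‖ * Real.exp (γ₁ * (n:ℝ) ^ β) ≤ S) →
      ∀ m : ℕ, 1 ≤ m →
        Summable (fun n : ℕ => ‖A m (n+1) * c (n+1)‖) ∧
        ‖∑' n : ℕ, A m (n+1) * c (n+1)‖ * Real.exp (γ₁ * (m:ℝ) ^ β) ≤ K * S := by
  have hg : Summable (fun n : ℕ => Real.exp (-ε * ((n : ℝ) + 1) ^ β)) :=
    aux_summable_exp β ε hβ₀ hε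
  set T : ℝ := ∑' n : ℕ, Real.exp (-ε * ((n : ℝ) + 1) ^ β) with hT
  have hT0 : 0 < T :=
    Summable.tsum_pos hg (fun n => (Real.exp_pos _).le) 0 (Real.exp_pos _)
  set C : ℝ := max C₀ C₁ with hC
  have hC0 : 0 < C := lt_max_of_lt_left hC₀
  refine ⟨C * T, by positivity, ?_⟩
  intro c S hS m hm
  have hS0 : 0 ≤ S := le_trans (by positivity) (hS 1 le_rfl)
  -- pointwise bound
  have key : ∀ n : ℕ, 1 ≤ n → ‖A m n * c n‖ ≤
      C * S * Real.exp (-γ₁ * (m : ℝ) ^ β) * Real.exp (-ε * (n : ℝ) ^ β) := by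
    intro n hn
    have hcn : ‖c n‖ ≤ S * Real.exp (-γ₁ * (n : ℝ) ^ β) := by
      have h2 := hS n hn
      have hEI : Real.exp (-γ₁ * (n:ℝ)^β) * Real.exp (γ₁ * (n:ℝ)^β) = 1 := by
        rw [← Real.exp_add]; norm_num
      nlinarith [Real.exp_pos (γ₁ * (n:ℝ)^β), Real.exp_pos (-γ₁ * (n:ℝ)^β), norm_nonneg (c n)]
    rw [norm_mul]
    rcases lt_or_ge m n with h | h
    · have hAb := (hA m n hm hn).1 h
      have hmn : (m : ℝ) ^ β ≤ (n : ℝ) ^ β :=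
        Real.rpow_le_rpow (by positivity) (by exact_mod_cast h.le) hβ₀.le
      calc ‖A m n‖ * ‖c n‖ ≤ (C₀ * Real.exp (-ε * (n:ℝ)^β)) * (S * Real.exp (-γ₁ * (n:ℝ)^β)) :=
            mul_le_mul hAb hcn (norm_nonneg _) (by positivity)
        _ ≤ (C * Real.exp (-ε * (n:ℝ)^β)) * (S * Real.exp (-γ₁ * (m:ℝ)^β)) := by
            apply mul_le_mul
            · exact mul_le_mul_of_nonneg_right (le_max_left _ _) (Real.exp_pos _).le
            · apply mul_le_mul_of_nonneg_left _ hS0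
              apply Real.exp_le_exp.2; nlinarith
            · positivity
            · positivity
        _ = C * S * Real.exp (-γ₁ * (m:ℝ)^β) * Real.exp (-ε * (n:ℝ)^β) := by ring
    · have hAb := (hA m n hm hn).2 h
      have hmn : (n : ℝ) ^ β ≤ (m : ℝ) ^ β :=
        Real.rpow_le_rpow (by positivity) (by exact_mod_cast h) hβ₀.le
      calc ‖A m n‖ * ‖c n‖
          ≤ (C₁ * Real.exp (γ₁ * (n:ℝ)^β) * Real.exp (-(γ₁+ε) * (m:ℝ)^β)) *
            (S * Real.exp (-γ₁ * (n:ℝ)^β)) :=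
            mul_le_mul hAb hcn (norm_nonneg _) (by positivity)
        _ = C₁ * S * (Real.exp (γ₁*(n:ℝ)^β + (-(γ₁+ε)*(m:ℝ)^β) + (-γ₁*(n:ℝ)^β))) := by
            rw [Real.exp_add, Real.exp_add]; ring
        _ = C₁ * S * (Real.exp (-γ₁*(m:ℝ)^β + -ε*(m:ℝ)^β)) := by congr 1; ring
        _ = C₁ * S * Real.exp (-γ₁ * (m:ℝ)^β) * Real.exp (-ε * (m:ℝ)^β) := by
            rw [Real.exp_add]; ring
        _ ≤ C * S * Real.exp (-γ₁ * (m:ℝ)^β) * Real.exp (-ε * (n:ℝ)^β) := by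
            apply mul_le_mul
            · apply mul_le_mul_of_nonneg_right _ (Real.exp_pos _).le
              exact mul_le_mul_of_nonneg_right (le_max_right _ _) hS0
            · apply Real.exp_le_exp.2; nlinarith
            · positivity
            · positivity
  have key' : ∀ n : ℕ, ‖A m (n+1) * c (n+1)‖ ≤
      (C * S * Real.exp (-γ₁ * (m : ℝ) ^ β)) * Real.exp (-ε * ((n : ℝ) + 1) ^ β) := by
    intro n
    have := key (n+1) (Nat.le_add_left 1 n)
    push_cast at this ⊢
    linarith
  have hsum : Summable (fun n : ℕ => ‖A m (n+1) * c (n+1)‖) :=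
    Summable.of_nonneg_of_le (fun n => norm_nonneg _) key' (hg.mul_left _)
  refine ⟨hsum, ?_⟩
  have hnorm : ‖∑' n : ℕ, A m (n+1) * c (n+1)‖ ≤
      (C * S * Real.exp (-γ₁ * (m : ℝ) ^ β)) * T := by
    calc ‖∑' n : ℕ, A m (n+1) * c (n+1)‖ ≤ ∑' n : ℕ, ‖A m (n+1) * c (n+1)‖ :=
          norm_tsum_le_tsum_norm hsum
      _ ≤ ∑' n : ℕ, (C * S * Real.exp (-γ₁ * (m : ℝ) ^ β)) * Real.exp (-ε * ((n:ℝ)+1) ^ β) :=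
          Summable.tsum_le_tsum key' hsum (hg.mul_left _)
      _ = (C * S * Real.exp (-γ₁ * (m : ℝ) ^ β)) * T := by rw [tsum_mul_left]
  calc ‖∑' n : ℕ, A m (n+1) * c (n+1)‖ * Real.exp (γ₁ * (m:ℝ) ^ β)
      ≤ ((C * S * Real.exp (-γ₁ * (m : ℝ) ^ β)) * T) * Real.exp (γ₁ * (m:ℝ) ^ β) :=
        mul_le_mul_of_nonneg_right hnorm (Real.exp_pos _).le
    _ = C * T * S * (Real.exp (-γ₁ * (m : ℝ) ^ β) * Real.exp (γ₁ * (m:ℝ) ^ β)) := by ring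
    _ = C * T * S := by rw [← Real.exp_add]; norm_num
end

section
/- For every γ > 0 and β ∈ (0,1] there exists a constant C > 0 such that for all positive integers m, n: Σ_{k=1}^∞ e^{−γ|m−k|^β}·e^{−γ|k−n|^β} ≤ C·e^{−(γ/2)|m−n|^β}. -/
open Real

lemma aux_rpow_subadd (a b p : ℝ) (ha : 0 ≤ a) (hb : 0 ≤ b) (hp0 : 0 ≤ p) (hp1 : p ≤ 1) :
    (a + b) ^ p ≤ a ^ p + b ^ p := by
  have h := NNReal.rpow_add_le_add_rpow a.toNNReal b.toNNReal hp0 hp1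
  have := NNReal.coe_le_coe.2 h
  push_cast at this
  rwa [Real.coe_toNNReal a ha, Real.coe_toNNReal b hb] at this

/-- Summability of `exp (-c * n ^ β)` over `ℕ`. -/
lemma aux_summable_nat (c β : ℝ) (hc : 0 < c) (hβ : 0 < β) :
    Summable fun n : ℕ => Real.exp (-c * (n : ℝ) ^ β) := by
  rw [← summable_nat_add_iff 1]
  set N : ℕ := ⌈(2:ℝ) / β⌉₊ with hN
  have hNβ : 2 ≤ (N : ℝ) * β := by
    have h1 : (2:ℝ) / β ≤ N := Nat.le_ceil _
    have : (2:ℝ) / β * β ≤ (N:ℝ) * β := by gcongr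
    rwa [div_mul_cancel₀ _ (ne_of_gt hβ)] at this
  have key : ∀ n : ℕ, Real.exp (-c * ((n + 1 : ℕ) : ℝ) ^ β)
      ≤ (N.factorial / c ^ N) * (1 / ((n:ℝ) + 1) ^ 2) := by
    intro n
    push_cast
    set x : ℝ := (n:ℝ) + 1 with hxdef
    have hx : (1:ℝ) ≤ x := by simp [hxdef]
    have hx0 : (0:ℝ) < x := lt_of_lt_of_le one_pos hx
    have hxb : (0:ℝ) < x ^ β := rpow_pos_of_pos hx0 β
    have h1 : (c * x ^ β) ^ N / N.factorial ≤ Real.exp (c * x ^ β) :=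
      Real.pow_div_factorial_le_exp _ (by positivity) N
    have h2 : x ^ 2 ≤ (x ^ β) ^ N := by
      rw [← Real.rpow_natCast (x ^ β) N, ← Real.rpow_mul hx0.le, ← Real.rpow_natCast x 2]
      exact Real.rpow_le_rpow_of_exponent_le hx (by push_cast; linarith)
    have h3 : x ^ 2 * (c ^ N / N.factorial) ≤ Real.exp (c * x ^ β) := by
      calc x ^ 2 * (c ^ N / N.factorial) ≤ (x ^ β) ^ N * (c ^ N / N.factorial) := by gcongr
        _ = (c * x ^ β) ^ N / N.factorial := by rw [mul_pow]; ring
        _ ≤ Real.exp (c * x ^ β) := h1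
    have hfac : (0:ℝ) < N.factorial := by positivity
    rw [neg_mul, Real.exp_neg,
      inv_le_comm₀ (Real.exp_pos _) (by positivity)]
    have h4 : ((N.factorial : ℝ) / c ^ N * (1 / x ^ 2))⁻¹ = x ^ 2 * (c ^ N / N.factorial) := by
      rw [one_div, mul_inv, inv_inv, inv_div]
      ring
    rw [h4]
    exact h3
  refine Summable.of_nonneg_of_le (fun n => (Real.exp_pos _).le) key ?_
  apply Summable.mul_left
  have hs : Summable fun n : ℕ => 1 / ((n:ℝ)) ^ 2 :=
    Real.summable_one_div_nat_pow.2 one_lt_two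
  have := (summable_nat_add_iff 1).2 hs
  simpa using this

lemma aux_summable_int (c β : ℝ) (hc : 0 < c) (hβ : 0 < β) :
    Summable fun j : ℤ => Real.exp (-c * |(j:ℝ)| ^ β) := by
  apply Summable.of_nat_of_neg <;>
  · simpa using aux_summable_nat c β hc hβ

/-- For every `γ > 0` and `β ∈ (0,1]` there is `C > 0` such that for all positive
integers `m, n`: `Σ_{k=1}^∞ e^{-γ|m-k|^β} e^{-γ|k-n|^β} ≤ C e^{-(γ/2)|m-n|^β}`. -/
theorem stmt_10 (γ β : ℝ) (hγ : 0 < γ) (hβ₀ : 0 < β) (hβ₁ : β ≤ 1) :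
    ∃ C > (0:ℝ), ∀ m n : ℕ, 1 ≤ m → 1 ≤ n →
      Summable (fun k : ℕ => Real.exp (-γ * |(m:ℝ) - ((k:ℝ) + 1)| ^ β) *
        Real.exp (-γ * |((k:ℝ) + 1) - (n:ℝ)| ^ β)) ∧
      ∑' k : ℕ, Real.exp (-γ * |(m:ℝ) - ((k:ℝ) + 1)| ^ β) *
          Real.exp (-γ * |((k:ℝ) + 1) - (n:ℝ)| ^ β)
        ≤ C * Real.exp (-(γ/2) * |(m:ℝ) - (n:ℝ)| ^ β) := by
  set c : ℝ := γ / 2 with hcdef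
  have hc : 0 < c := by positivity
  set f : ℤ → ℝ := fun j => Real.exp (-c * |(j:ℝ)| ^ β) with hf
  have hfs : Summable f := aux_summable_int c β hc hβ₀
  refine ⟨∑' j, f j, Summable.tsum_pos hfs (fun j => (Real.exp_pos _).le) 0 (Real.exp_pos _), ?_⟩
  intro m n hm hn
  set e : ℕ → ℤ := fun k => ((k:ℤ) + 1) - m with he
  have hei : Function.Injective e := by
    intro a b hab
    simpa [he] using hab
  -- key termwise bound
  have key : ∀ k : ℕ, Real.exp (-γ * |(m:ℝ) - ((k:ℝ) + 1)| ^ β) *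
      Real.exp (-γ * |((k:ℝ) + 1) - (n:ℝ)| ^ β)
      ≤ Real.exp (-c * |(m:ℝ) - (n:ℝ)| ^ β) * f (e k) := by
    intro k
    have hfe : f (e k) = Real.exp (-c * |(m:ℝ) - ((k:ℝ) + 1)| ^ β) := by
      simp only [hf, he]
      congr 2
      push_cast
      rw [abs_sub_comm]
    rw [hfe, ← Real.exp_add, ← Real.exp_add]
    apply Real.exp_le_exp.2
    set a : ℝ := |(m:ℝ) - ((k:ℝ) + 1)| with ha
    set b : ℝ := |((k:ℝ) + 1) - (n:ℝ)| with hb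
    have ha0 : 0 ≤ a := abs_nonneg _
    have hb0 : 0 ≤ b := abs_nonneg _
    have hd : |(m:ℝ) - (n:ℝ)| ≤ a + b := by
      calc |(m:ℝ) - (n:ℝ)| = |((m:ℝ) - ((k:ℝ)+1)) + (((k:ℝ)+1) - (n:ℝ))| := by ring_nf
        _ ≤ a + b := abs_add_le _ _
    have h1 : |(m:ℝ) - (n:ℝ)| ^ β ≤ a ^ β + b ^ β := by
      calc |(m:ℝ) - (n:ℝ)| ^ β ≤ (a + b) ^ β :=
            rpow_le_rpow (abs_nonneg _) hd hβ₀.le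
        _ ≤ a ^ β + b ^ β := aux_rpow_subadd a b β ha0 hb0 hβ₀.le hβ₁
    have hab : 0 ≤ a ^ β := rpow_nonneg ha0 β
    have hbb : 0 ≤ b ^ β := rpow_nonneg hb0 β
    have hγc : γ = c + c := by rw [hcdef]; ring
    nlinarith [mul_le_mul_of_nonneg_left h1 hc.le]
  have hnn : ∀ k : ℕ, 0 ≤ Real.exp (-γ * |(m:ℝ) - ((k:ℝ) + 1)| ^ β) *
      Real.exp (-γ * |((k:ℝ) + 1) - (n:ℝ)| ^ β) := fun k => by positivity
  have hgsum : Summable fun k : ℕ => Real.exp (-c * |(m:ℝ) - (n:ℝ)| ^ β) * f (e k) :=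
    ((hfs.comp_injective hei).mul_left _)
  have hsum : Summable (fun k : ℕ => Real.exp (-γ * |(m:ℝ) - ((k:ℝ) + 1)| ^ β) *
      Real.exp (-γ * |((k:ℝ) + 1) - (n:ℝ)| ^ β)) :=
    Summable.of_nonneg_of_le hnn key hgsum
  refine ⟨hsum, ?_⟩
  calc ∑' k : ℕ, Real.exp (-γ * |(m:ℝ) - ((k:ℝ) + 1)| ^ β) *
          Real.exp (-γ * |((k:ℝ) + 1) - (n:ℝ)| ^ β)
      ≤ ∑' k : ℕ, Real.exp (-c * |(m:ℝ) - (n:ℝ)| ^ β) * f (e k) :=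
        Summable.tsum_le_tsum key hsum hgsum
    _ = Real.exp (-c * |(m:ℝ) - (n:ℝ)| ^ β) * ∑' k : ℕ, f (e k) := tsum_mul_left
    _ ≤ Real.exp (-c * |(m:ℝ) - (n:ℝ)| ^ β) * ∑' j : ℤ, f j := by
        gcongr
        exact Summable.tsum_le_tsum_of_inj e hei (fun j _ => (Real.exp_pos _).le)
          (fun k => le_refl _) (hfs.comp_injective hei) hfs
    _ = (∑' j, f j) * Real.exp (-(γ/2) * |(m:ℝ) - (n:ℝ)| ^ β) := by
        rw [mul_comm, hcdef]
end

section
/- Let β ∈ (0,1], γ > 0, and let (A_{m,n})_{m,n∈ℕ} be a matrix of complex numbers with |A_{m,n}| ≤ C_γ·e^{−γ|m−n|^β} for some C_γ > 0 and all m, n (i.e., the matrix belongs to the class E_{γ,β}). Let μ : ℝ → (0,∞) be a β_μ-sub-exponential weight with β_μ < β. Then for every p ∈ [1,∞) there exists K > 0 such that for every complex sequence (c_n)_{n≥1} with Σ_n |c_n|^p μ(n)^p < ∞: each series a_m = Σ_{n=1}^∞ A_{m,n} c_n converges absolutely, and Σ_m |a_m|^p μ(m)^p ≤ K^p · Σ_n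 |c_n|^p μ(n)^p. That is, the matrix operator maps ℓ^p_μ boundedly into ℓ^p_μ. -/
/-!
Because `βμ < β`, the decay `exp (-γ |m - n| ^ β)` of the matrix beats the growth
`exp (γ' |m - n| ^ βμ)` allowed for the ratio `μ m / μ n`. Conjugating the matrix by the weight
therefore gives a matrix dominated entrywise by `k (|m - n|)` with `k` summable, and such a
matrix is bounded on `ℓ^p` with norm at most `2 ∑ k` by Schur's test: Hölder's inequality on
each row against the weights `k (|m - n|)`, then exchange of the order of summation. The test is
run in `ℝ≥0∞`, where every series has a sum, and the summability claims are read off from the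
finiteness of the bound.
-/

open Real Filter Asymptotics
open scoped ENNReal

theorem Nat.cast_dist_eq_abs_sub (m n : ℕ) : ((Nat.dist m n : ℕ) : ℝ) = |(m : ℝ) - n| := by
  rcases le_total m n with h | h
  · rw [Nat.dist_eq_sub_of_le h, Nat.cast_sub h, abs_sub_comm, abs_of_nonneg (by simpa using h)]
  · rw [Nat.dist_eq_sub_of_le_right h, Nat.cast_sub h, abs_of_nonneg (by simpa using h)]

theorem summable_exp_neg_mul_rpow {δ b : ℝ} (hδ : 0 < δ) (hb : 0 < b) :
    Summable fun k : ℕ => exp (-δ * (k : ℝ) ^ b) := by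
  have h := (isLittleO_exp_neg_mul_rpow_atTop hδ (-2 / b)).comp_tendsto
    ((tendsto_rpow_atTop hb).comp tendsto_natCast_atTop_atTop)
  refine summable_of_isBigO_nat (Real.summable_nat_rpow.2 (by norm_num : (-2 : ℝ) < -1))
    (h.isBigO.congr_right fun k => ?_)
  simp only [Function.comp_apply, ← Real.rpow_mul (Nat.cast_nonneg k)]
  rw [mul_div_cancel₀ _ hb.ne']

theorem summable_exp_mul_rpow_sub_mul_rpow {γ γ' b b' : ℝ} (hγ : 0 < γ) (hb : 0 < b)
    (hbb' : b' < b) : Summable fun k : ℕ => exp (γ' * (k : ℝ) ^ b' - γ * (k : ℝ) ^ b) := by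
  have hev : ∀ᶠ t : ℝ in atTop, γ' * t ^ b' ≤ γ / 2 * t ^ b := by
    filter_upwards [(tendsto_rpow_atTop (sub_pos.2 hbb')).eventually_ge_atTop (2 * γ' / γ),
      eventually_gt_atTop 0] with t ht ht₀
    rw [div_le_iff₀ hγ] at ht
    rw [← sub_add_cancel b b', rpow_add ht₀, ← mul_assoc]
    exact mul_le_mul_of_nonneg_right (by linarith) (rpow_nonneg ht₀.le _)
  refine (summable_exp_neg_mul_rpow (half_pos hγ) hb).of_norm_bounded_eventually_nat ?_
  filter_upwards [tendsto_natCast_atTop_atTop.eventually hev] with k hk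
  rw [Real.norm_eq_abs, abs_of_pos (exp_pos _)]
  gcongr
  linarith

theorem mul_le_mul_exp_sub_of_le {μ : ℝ → ℝ} {Cμ γ' βμ : ℝ}
    (hsub : ∀ t x, μ (t + x) ≤ Cμ * exp (γ' * |t| ^ βμ) * μ x) {a Cγ γ β x y : ℝ}
    (ha₀ : 0 ≤ a) (ha : a ≤ Cγ * exp (-γ * |x - y| ^ β)) (hμx : 0 ≤ μ x) :
    a * μ x ≤ Cγ * Cμ * exp (γ' * |x - y| ^ βμ - γ * |x - y| ^ β) * μ y := by
  have hμ : μ x ≤ Cμ * exp (γ' * |x - y| ^ βμ) * μ y := by simpa using hsub (x - y) y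
  calc a * μ x ≤ Cγ * exp (-γ * |x - y| ^ β) * (Cμ * exp (γ' * |x - y| ^ βμ) * μ y) :=
        mul_le_mul ha hμ hμx (ha₀.trans ha)
    _ = _ := by rw [sub_eq_neg_add (γ' * _), exp_add, neg_mul]; ring

namespace ENNReal

theorem inner_le_weight_mul_Lp_tsum {ι : Type*} {p : ℝ} (hp : 1 ≤ p) (w f : ι → ℝ≥0∞) :
    ∑' i, w i * f i ≤ (∑' i, w i) ^ (1 - p⁻¹) * (∑' i, w i * f i ^ p) ^ p⁻¹ := by
  rw [ENNReal.tsum_eq_iSup_sum]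
  refine iSup_le fun s => (inner_le_weight_mul_Lp_of_nonneg s hp w f).trans ?_
  gcongr
  · simp only [sub_nonneg]; exact inv_le_one_of_one_le₀ hp
  · exact ENNReal.sum_le_tsum s
  · exact ENNReal.sum_le_tsum s

theorem rpow_tsum_mul_le {ι : Type*} {p : ℝ} (hp : 1 ≤ p) (w f : ι → ℝ≥0∞) :
    (∑' i, w i * f i) ^ p ≤ (∑' i, w i) ^ (p - 1) * ∑' i, w i * f i ^ p := by
  have hp₀ : 0 < p := by linarith
  calc (∑' i, w i * f i) ^ p
      ≤ ((∑' i, w i) ^ (1 - p⁻¹) * (∑' i, w i * f i ^ p) ^ p⁻¹) ^ p := by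
        gcongr; exact inner_le_weight_mul_Lp_tsum hp w f
    _ = (∑' i, w i) ^ (p - 1) * ∑' i, w i * f i ^ p := by
        rw [ENNReal.mul_rpow_of_nonneg _ _ hp₀.le, ← ENNReal.rpow_mul, ← ENNReal.rpow_mul,
          inv_mul_cancel₀ hp₀.ne', ENNReal.rpow_one, sub_mul, one_mul, inv_mul_cancel₀ hp₀.ne']

theorem tsum_rpow_tsum_mul_le {ι κ : Type*} {p : ℝ} (hp : 1 ≤ p) {H : ι → κ → ℝ≥0∞}
    {R C : ℝ≥0∞} (hrow : ∀ i, ∑' j, H i j ≤ R) (hcol : ∀ j, ∑' i, H i j ≤ C) (x : κ → ℝ≥0∞) :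
    ∑' i, (∑' j, H i j * x j) ^ p ≤ R ^ (p - 1) * C * ∑' j, x j ^ p :=
  calc ∑' i, (∑' j, H i j * x j) ^ p
      ≤ ∑' i, R ^ (p - 1) * ∑' j, H i j * x j ^ p := ENNReal.tsum_le_tsum fun i =>
        (rpow_tsum_mul_le hp (H i) x).trans
          (mul_le_mul_left (ENNReal.rpow_le_rpow (hrow i) (by linarith)) _)
    _ = R ^ (p - 1) * ∑' j, (∑' i, H i j) * x j ^ p := by
        rw [ENNReal.tsum_mul_left, ENNReal.tsum_comm]
        simp only [ENNReal.tsum_mul_right]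
    _ ≤ R ^ (p - 1) * C * ∑' j, x j ^ p := by
        rw [mul_assoc]
        gcongr (R ^ (p - 1)) * ?_
        rw [← ENNReal.tsum_mul_left]
        exact ENNReal.tsum_le_tsum fun j => mul_le_mul_left (hcol j) _

theorem tsum_comp_dist_le (g : ℕ → ℝ≥0∞) (m : ℕ) :
    ∑' n, g (Nat.dist m n) ≤ 2 * ∑' k, g k := by
  have hlow : Function.Injective fun n : Set.Iic m => Nat.dist m n := by
    rintro ⟨a, ha⟩ ⟨b, hb⟩ (h : Nat.dist m a = Nat.dist m b)
    simp only [Set.mem_Iic] at ha hb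
    simp only [Nat.dist_eq_sub_of_le_right ha, Nat.dist_eq_sub_of_le_right hb] at h
    exact Subtype.ext (show a = b by omega)
  have hup : Function.Injective fun n : Set.Ici m => Nat.dist m n := by
    rintro ⟨a, ha⟩ ⟨b, hb⟩ (h : Nat.dist m a = Nat.dist m b)
    simp only [Set.mem_Ici] at ha hb
    simp only [Nat.dist_eq_sub_of_le ha, Nat.dist_eq_sub_of_le hb] at h
    exact Subtype.ext (show a = b by omega)
  calc ∑' n, g (Nat.dist m n)
      = ∑' n : ↑(Set.Iic m ∪ Set.Ici m), g (Nat.dist m n) := by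
        rw [Set.Iic_union_Ici]; exact (tsum_univ (f := fun n => g (Nat.dist m n))).symm
    _ ≤ ∑' n : Set.Iic m, g (Nat.dist m n) + ∑' n : Set.Ici m, g (Nat.dist m n) :=
        ENNReal.tsum_union_le (fun n => g (Nat.dist m n)) _ _
    _ ≤ ∑' k, g k + ∑' k, g k :=
        add_le_add (ENNReal.tsum_comp_le_tsum_of_injective hlow g)
          (ENNReal.tsum_comp_le_tsum_of_injective hup g)
    _ = 2 * ∑' k, g k := (two_mul _).symm

theorem tsum_rpow_tsum_dist_mul_le {p : ℝ} (hp : 1 ≤ p) (g x : ℕ → ℝ≥0∞) :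
    ∑' m, (∑' n, g (Nat.dist m n) * x n) ^ p ≤ (2 * ∑' d, g d) ^ p * ∑' n, x n ^ p := by
  have hrow : ∀ m, ∑' n, g (Nat.dist m n) ≤ 2 * ∑' d, g d := tsum_comp_dist_le g
  have hcol : ∀ n, ∑' m, g (Nat.dist m n) ≤ 2 * ∑' d, g d := fun n => by
    simpa only [Nat.dist_comm] using hrow n
  refine (tsum_rpow_tsum_mul_le hp hrow hcol x).trans_eq ?_
  congr 1
  conv_rhs => rw [← sub_add_cancel p 1]
  rw [rpow_add_of_nonneg _ _ (by linarith) zero_le_one, rpow_one]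

end ENNReal

theorem summable_and_tsum_le_of_tsum_ofReal_le {ι : Type*} {f : ι → ℝ} (hf : ∀ i, 0 ≤ f i)
    {c : ℝ} (hc : 0 ≤ c) (h : ∑' i, ENNReal.ofReal (f i) ≤ ENNReal.ofReal c) :
    Summable f ∧ ∑' i, f i ≤ c := by
  have hsum : Summable f := by
    simpa only [ENNReal.toReal_ofReal (hf _)] using
      ENNReal.summable_toReal (ne_top_of_le_ne_top ENNReal.ofReal_ne_top h)
  refine ⟨hsum, (ENNReal.ofReal_le_ofReal_iff hc).1 ?_⟩
  rwa [ENNReal.ofReal_tsum_of_nonneg hf hsum]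

theorem summable_and_tsum_rpow_norm_tsum_le {𝕜 : Type*} [NormedRing 𝕜] {B : ℕ → ℕ → 𝕜}
    {k : ℕ → ℝ} (hk : Summable k) (hB : ∀ m n, ‖B m n‖ ≤ k (Nat.dist m n)) {p : ℝ} (hp : 1 ≤ p)
    {y : ℕ → 𝕜} (hy : Summable fun n => ‖y n‖ ^ p) :
    (∀ m, Summable fun n => ‖B m n * y n‖) ∧
      Summable (fun m => ‖∑' n, B m n * y n‖ ^ p) ∧
      ∑' m, ‖∑' n, B m n * y n‖ ^ p ≤ (2 * ∑' d, k d) ^ p * ∑' n, ‖y n‖ ^ p := by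
  have hp₀ : 0 < p := by linarith
  have hk₀ : ∀ d, 0 ≤ k d := fun d =>
    (norm_nonneg (B 0 d)).trans (by simpa [Nat.dist] using hB 0 d)
  have hK₀ : 0 ≤ 2 * ∑' d, k d := mul_nonneg zero_le_two (tsum_nonneg hk₀)
  have henorm_rpow : ∀ z : 𝕜, ‖z‖ₑ ^ p = ENNReal.ofReal (‖z‖ ^ p) := fun z => by
    rw [← ofReal_norm, ENNReal.ofReal_rpow_of_nonneg (norm_nonneg _) hp₀.le]
  have hentry : ∀ m n, ‖B m n * y n‖ₑ ≤ ENNReal.ofReal (k (Nat.dist m n)) * ‖y n‖ₑ :=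
    fun m n => by
      rw [← ofReal_norm, ← ofReal_norm, ← ENNReal.ofReal_mul (hk₀ _)]
      exact ENNReal.ofReal_le_ofReal ((norm_mul_le _ _).trans
        (mul_le_mul_of_nonneg_right (hB m n) (norm_nonneg _)))
  have hbound : ∑' m, (∑' n, ‖B m n * y n‖ₑ) ^ p
      ≤ ENNReal.ofReal ((2 * ∑' d, k d) ^ p * ∑' n, ‖y n‖ ^ p) := by
    calc ∑' m, (∑' n, ‖B m n * y n‖ₑ) ^ p
        ≤ ∑' m, (∑' n, ENNReal.ofReal (k (Nat.dist m n)) * ‖y n‖ₑ) ^ p := by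
          gcongr with m n
          exact hentry m n
      _ ≤ (2 * ∑' d, ENNReal.ofReal (k d)) ^ p * ∑' n, ‖y n‖ₑ ^ p :=
          ENNReal.tsum_rpow_tsum_dist_mul_le hp _ _
      _ = ENNReal.ofReal ((2 * ∑' d, k d) ^ p * ∑' n, ‖y n‖ ^ p) := by
          rw [ENNReal.ofReal_mul (by positivity), ← ENNReal.ofReal_rpow_of_nonneg hK₀ hp₀.le,
            ENNReal.ofReal_mul zero_le_two, ENNReal.ofReal_ofNat,
            ENNReal.ofReal_tsum_of_nonneg hk₀ hk,
            ENNReal.ofReal_tsum_of_nonneg (fun n => by positivity) hy]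
          simp only [henorm_rpow]
  refine ⟨fun m => ?_, summable_and_tsum_le_of_tsum_ofReal_le (fun m => by positivity)
    (by positivity) (le_trans ?_ hbound)⟩
  · rw [← tsum_enorm_ne_top_iff_summable_norm]
    have := (ENNReal.le_tsum m).trans_lt (hbound.trans_lt ENNReal.ofReal_lt_top)
    exact (ENNReal.rpow_lt_top_iff_of_pos hp₀).1 this |>.ne
  · gcongr with m
    rw [← henorm_rpow]
    gcongr
    exact enorm_tsum_le_tsum_enorm

theorem summable_and_tsum_rpow_norm_tsum_weight_le {𝕜 : Type*} [RCLike 𝕜] {a : ℕ → ℕ → 𝕜}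
    {w : ℕ → ℝ} (hw : ∀ n, 0 < w n) {k : ℕ → ℝ} (hk : Summable k)
    (ha : ∀ m n, ‖a m n‖ * w m ≤ k (Nat.dist m n) * w n) {p : ℝ} (hp : 1 ≤ p) {c : ℕ → 𝕜}
    (hc : Summable fun n => ‖c n‖ ^ p * w n ^ p) :
    (∀ m, Summable fun n => ‖a m n * c n‖) ∧
      Summable (fun m => ‖∑' n, a m n * c n‖ ^ p * w m ^ p) ∧
      ∑' m, ‖∑' n, a m n * c n‖ ^ p * w m ^ p
        ≤ (2 * ∑' d, k d) ^ p * ∑' n, ‖c n‖ ^ p * w n ^ p := by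
  have hnorm_mul : ∀ n (z : 𝕜), ‖(w n : 𝕜) * z‖ = ‖z‖ * w n := fun n z => by
    rw [norm_mul, RCLike.norm_ofReal, abs_of_pos (hw n), mul_comm]
  have hnorm_rpow : ∀ n (z : 𝕜), ‖(w n : 𝕜) * z‖ ^ p = ‖z‖ ^ p * w n ^ p := fun n z => by
    rw [hnorm_mul, mul_rpow (norm_nonneg _) (hw n).le]
  have hconj : ∀ m n, a m n * ((w m / w n : ℝ) : 𝕜) * ((w n : 𝕜) * c n)
      = (w m : 𝕜) * (a m n * c n) := fun m n => by
    have : (w n : 𝕜) ≠ 0 := RCLike.ofReal_ne_zero.2 (hw n).ne'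
    push_cast; field_simp
  have hB : ∀ m n, ‖a m n * ((w m / w n : ℝ) : 𝕜)‖ ≤ k (Nat.dist m n) := fun m n => by
    rw [norm_mul, RCLike.norm_ofReal, abs_of_pos (div_pos (hw m) (hw n)), ← mul_div_assoc,
      div_le_iff₀ (hw n)]
    exact ha m n
  obtain ⟨hrow, hsum, hle⟩ :=
    summable_and_tsum_rpow_norm_tsum_le hk hB hp (y := fun n => (w n : 𝕜) * c n)
      (by simpa only [hnorm_rpow] using hc)
  simp only [hconj, tsum_mul_left, hnorm_rpow] at hrow hsum hle
  refine ⟨fun m => ?_, hsum, hle⟩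
  refine ((hrow m).div_const (w m)).congr fun n => ?_
  rw [hnorm_mul, mul_div_cancel_right₀ _ (hw m).ne']

theorem stmt_11_general (β γ : ℝ) (hβ₀ : 0 < β) (hγ : 0 < γ)
    (A : ℕ → ℕ → ℂ) (Cγ : ℝ) (hCγ : 0 < Cγ)
    (hA : ∀ m n : ℕ, 1 ≤ m → 1 ≤ n →
      ‖A m n‖ ≤ Cγ * Real.exp (-γ * |(m:ℝ) - (n:ℝ)| ^ β))
    (μ : ℝ → ℝ) (hμpos : ∀ x, 0 < μ x)
    (βμ : ℝ) (hβμβ : βμ < β)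
    (hsub : ∃ Cμ > (0:ℝ), ∃ γ' > (0:ℝ), ∀ t x : ℝ,
      μ (t + x) ≤ Cμ * Real.exp (γ' * |t| ^ βμ) * μ x)
    (p : ℝ) (hp : 1 ≤ p) :
    ∃ K > (0:ℝ), ∀ c : ℕ → ℂ,
      Summable (fun n : ℕ => ‖c (n+1)‖ ^ p * μ ((n:ℝ) + 1) ^ p) →
      (∀ m : ℕ, 1 ≤ m → Summable (fun n : ℕ => ‖A m (n+1) * c (n+1)‖)) ∧
      Summable (fun m : ℕ =>
        ‖∑' n : ℕ, A (m+1) (n+1) * c (n+1)‖ ^ p * μ ((m:ℝ) + 1) ^ p) ∧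
      ∑' m : ℕ, ‖∑' n : ℕ, A (m+1) (n+1) * c (n+1)‖ ^ p * μ ((m:ℝ) + 1) ^ p
        ≤ K ^ p * ∑' n : ℕ, ‖c (n+1)‖ ^ p * μ ((n:ℝ) + 1) ^ p := by
  obtain ⟨Cμ, hCμ, γ', -, hμsub⟩ := hsub
  set k : ℕ → ℝ := fun d => Cγ * Cμ * exp (γ' * (d : ℝ) ^ βμ - γ * (d : ℝ) ^ β)
  have hk : Summable k := (summable_exp_mul_rpow_sub_mul_rpow hγ hβ₀ hβμβ).mul_left _
  have hK : 0 < 2 * ∑' d, k d :=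
    mul_pos two_pos (hk.tsum_pos (fun d => by positivity) 0 (by positivity))
  have ha : ∀ m n : ℕ, ‖A (m + 1) (n + 1)‖ * μ ((m : ℝ) + 1)
      ≤ k (Nat.dist m n) * μ ((n : ℝ) + 1) := fun m n => by
    simpa [k, Nat.cast_dist_eq_abs_sub] using mul_le_mul_exp_sub_of_le hμsub (norm_nonneg _)
      (hA (m + 1) (n + 1) (by omega) (by omega)) (hμpos _).le
  refine ⟨2 * ∑' d, k d, hK, fun c hc => ?_⟩
  obtain ⟨hrow, hsum, hle⟩ :=
    summable_and_tsum_rpow_norm_tsum_weight_le (fun n => hμpos _) hk ha hp hc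
  refine ⟨fun m hm => ?_, hsum, hle⟩
  obtain ⟨m, rfl⟩ := Nat.exists_eq_add_of_le' hm
  exact hrow m

/-- A matrix in the class `E_{γ,β}` maps `ℓ^p_μ` boundedly into `ℓ^p_μ`, for every
`β_μ`-sub-exponential weight `μ` with `β_μ < β` and every `p ∈ [1,∞)`. -/
theorem stmt_11 (β γ : ℝ) (hβ₀ : 0 < β) (hβ₁ : β ≤ 1) (hγ : 0 < γ)
    (A : ℕ → ℕ → ℂ) (Cγ : ℝ) (hCγ : 0 < Cγ)
    (hA : ∀ m n : ℕ, 1 ≤ m → 1 ≤ n →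
      ‖A m n‖ ≤ Cγ * Real.exp (-γ * |(m:ℝ) - (n:ℝ)| ^ β))
    (μ : ℝ → ℝ) (hμpos : ∀ x, 0 < μ x) (hμcont : Continuous μ)
    (βμ : ℝ) (hβμ₀ : 0 < βμ) (hβμ₁ : βμ < 1) (hβμβ : βμ < β)
    (hsub : ∃ Cμ > (0:ℝ), ∃ γ' > (0:ℝ), ∀ t x : ℝ,
      μ (t + x) ≤ Cμ * Real.exp (γ' * |t| ^ βμ) * μ x)
    (p : ℝ) (hp : 1 ≤ p) :
    ∃ K > (0:ℝ), ∀ c : ℕ → ℂ,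
      Summable (fun n : ℕ => ‖c (n+1)‖ ^ p * μ ((n:ℝ) + 1) ^ p) →
      (∀ m : ℕ, 1 ≤ m → Summable (fun n : ℕ => ‖A m (n+1) * c (n+1)‖)) ∧
      Summable (fun m : ℕ =>
        ‖∑' n : ℕ, A (m+1) (n+1) * c (n+1)‖ ^ p * μ ((m:ℝ) + 1) ^ p) ∧
      ∑' m : ℕ, ‖∑' n : ℕ, A (m+1) (n+1) * c (n+1)‖ ^ p * μ ((m:ℝ) + 1) ^ p
        ≤ K ^ p * ∑' n : ℕ, ‖c (n+1)‖ ^ p * μ ((n:ℝ) + 1) ^ p :=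
  stmt_11_general β γ hβ₀ hγ A Cγ hCγ hA μ hμpos βμ hβμβ hsub p hp
end

section
/- (Jaffard's theorem, sub-exponential/exponential case.) Let β ∈ (0,1] and γ > 0. Let T be a bounded linear operator on ℓ²(ℕ, ℂ) which is bijective, and suppose its matrix A_{m,n} := ⟨T δ_n, δ_m⟩ (where δ_k denotes the k-th canonical vector) satisfies |A_{m,n}| ≤ C·e^{−γ|m−n|^β} for some C > 0 and all positive integers m, n. Then there exist γ₁ ∈ (0, γ) and C₁ > 0 such that the matrix of the inverse operator satisfies |⟨T^{−1} δ_n, δ_m⟩| ≤ C₁·e^{−γ₁|m−n|^β} for all m, n. -/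
/-!
Conjugate `T` by the diagonal weight `e^v`, where `v k = θ |k - n|^β` truncated at distance
`|m - n|`. Since `t ↦ t^β` is subadditive, `v` is `β`-Hölder with constant `θ`, so the conjugated
matrix differs from that of `T` by entries `(e^{v_j - v_k} - 1) T_{jk} = O(θ e^{-γ|j-k|^β/2})`,
and by the Schur test this perturbation has operator norm `O(θ)`. For `θ` small, the weighted
vector `y = e^v T⁻¹ δ_n` then satisfies `T y = δ_n + O(θ ‖y‖)`, hence `‖y‖ ≤ 2 ‖T⁻¹‖`, and its
`m`-th coordinate gives `|(T⁻¹ δ_n)_m| ≤ 2 ‖T⁻¹‖ e^{-θ|m-n|^β}`.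
-/

open Real Filter Topology

theorem sum_comp_le_tsum_of_injective {α β : Type*} {f : β → ℝ} (hf : Summable f)
    (hf₀ : ∀ b, 0 ≤ f b) {i : α → β} (hi : Function.Injective i) (s : Finset α) :
    ∑ a ∈ s, f (i a) ≤ ∑' b, f b :=
  ((hf.comp_injective hi).sum_le_tsum s fun _ _ => hf₀ _).trans (tsum_comp_le_tsum_of_inj hf hf₀ hi)

theorem Real.abs_rpow_sub_rpow_le {a b β : ℝ} (ha : 0 ≤ a) (hb : 0 ≤ b) (hβ₀ : 0 ≤ β)
    (hβ₁ : β ≤ 1) : |a ^ β - b ^ β| ≤ |a - b| ^ β := by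
  wlog hab : b ≤ a generalizing a b
  · rw [abs_sub_comm, abs_sub_comm a]
    exact this hb ha (le_of_not_ge hab)
  have hsub : a ^ β ≤ b ^ β + (a - b) ^ β := by
    simpa using rpow_add_le_add_rpow hb (sub_nonneg.2 hab) hβ₀ hβ₁
  rw [abs_of_nonneg (sub_nonneg.2 (rpow_le_rpow hb hab hβ₀)), abs_of_nonneg (sub_nonneg.2 hab)]
  linarith

theorem abs_min_abs_sub_rpow_sub_le {β R : ℝ} (hβ₀ : 0 ≤ β) (hβ₁ : β ≤ 1) (hR : 0 ≤ R)
    (x y c : ℝ) : |min |x - c| R ^ β - min |y - c| R ^ β| ≤ |x - y| ^ β := by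
  refine (abs_rpow_sub_rpow_le (le_min (abs_nonneg _) hR) (le_min (abs_nonneg _) hR) hβ₀
    hβ₁).trans (rpow_le_rpow (abs_nonneg _) ?_ hβ₀)
  calc |min |x - c| R - min |y - c| R| ≤ |(|x - c|) - (|y - c|)| := by
        simpa using abs_min_sub_min_le_max |x - c| R |y - c| R
    _ ≤ |x - y| := by simpa using abs_abs_sub_abs_le_abs_sub (x - c) (y - c)

theorem Real.abs_exp_sub_one_le_exp_abs_sub_one (u : ℝ) : |exp u - 1| ≤ exp |u| - 1 := by
  rw [abs_sub_le_iff]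
  constructor
  · linarith [exp_le_exp.2 (le_abs_self u)]
  · linarith [add_one_le_exp u, add_one_le_exp |u|, neg_le_abs u]

theorem Real.exp_mul_sub_one_le {ε : ℝ} (hε₀ : 0 ≤ ε) (hε₁ : ε ≤ 1) (s : ℝ) :
    exp (ε * s) - 1 ≤ ε * (exp s - 1) := by
  have hconv := convexOn_exp.2 (Set.mem_univ s) (Set.mem_univ 0) hε₀ (sub_nonneg.2 hε₁)
    (add_sub_cancel ε 1)
  simp only [smul_eq_mul, mul_zero, add_zero, exp_zero, mul_one] at hconv
  linarith

theorem abs_exp_sub_one_mul_le {u t ε γ C x : ℝ} (hε₀ : 0 ≤ ε) (hε₁ : ε ≤ 1)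
    (hu : |u| ≤ ε * (γ / 2) * t) (hx₀ : 0 ≤ x) (hx : x ≤ C * exp (-γ * t)) :
    |exp u - 1| * x ≤ ε * C * exp (-(γ / 2) * t) := by
  have hC : 0 ≤ C := nonneg_of_mul_nonneg_left (hx₀.trans hx) (exp_pos _)
  calc |exp u - 1| * x ≤ (exp (ε * (γ / 2 * t)) - 1) * (C * exp (-γ * t)) := by
        gcongr
        · linarith [add_one_le_exp (ε * (γ / 2 * t)), (abs_nonneg u).trans hu]
        · refine (abs_exp_sub_one_le_exp_abs_sub_one u).trans ?_
          rw [← mul_assoc]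
          gcongr
    _ ≤ ε * (exp (γ / 2 * t) - 1) * (C * exp (-γ * t)) := by
        gcongr
        exact exp_mul_sub_one_le hε₀ hε₁ _
    _ ≤ ε * exp (γ / 2 * t) * (C * exp (-γ * t)) := by
        gcongr
        linarith
    _ = ε * C * exp (-(γ / 2) * t) := by
        rw [mul_mul_mul_comm, ← exp_add]
        ring_nf

theorem summable_exp_neg_mul_abs_rpow {c β : ℝ} (hc : 0 < c) (hβ : 0 < β) :
    Summable fun z : ℤ => exp (-c * |(z : ℝ)| ^ β) := by
  have hlim : Tendsto (fun z : ℤ => |(z : ℝ)| ^ β) cofinite atTop :=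
    (tendsto_rpow_atTop hβ).comp (tendsto_norm_cocompact_atTop.comp Int.tendsto_coe_cofinite)
  have ho := (isLittleO_exp_neg_mul_rpow_atTop hc (-2 / β)).comp_tendsto hlim
  refine summable_of_isBigO (summable_abs_int_rpow one_lt_two)
    (ho.isBigO.congr_right fun z => ?_)
  simp only [Function.comp_apply, ← rpow_mul (abs_nonneg _)]
  field_simp

section SchurTest

variable {ι κ 𝕜 : Type*}

theorem lp.hasSum_apply_single_mul [NormedField 𝕜] [DecidableEq κ]
    (B : lp (fun _ : κ => 𝕜) 2 →L[𝕜] lp (fun _ : ι => 𝕜) 2) (z : lp (fun _ : κ => 𝕜) 2)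
    (j : ι) : HasSum (fun k => B (lp.single 2 k 1) j * z k) (B z j) := by
  have h := (lp.evalCLM 𝕜 _ 2 j).hasSum (B.hasSum (lp.hasSum_single ENNReal.ofNat_ne_top z))
  have hk : ∀ k, lp.evalCLM 𝕜 _ 2 j (B (lp.single 2 k (z k))) = B (lp.single 2 k 1) j * z k := by
    intro k
    have hs : (lp.single 2 k (z k) : lp (fun _ : κ => 𝕜) 2) = z k • lp.single 2 k 1 := by
      rw [← lp.single_smul, smul_eq_mul, mul_one]
    rw [hs, map_smul, map_smul, smul_eq_mul, mul_comm]
    rfl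
  simp only [hk] at h
  exact h

theorem Finset.sum_norm_sum_mul_sq_le_of_schur [SeminormedRing 𝕜] (s : Finset ι)
    (t : Finset κ) (a : ι → κ → 𝕜) (z : κ → 𝕜) {S : ℝ} (hS : 0 ≤ S)
    (hrow : ∀ j ∈ s, ∑ k ∈ t, ‖a j k‖ ≤ S) (hcol : ∀ k ∈ t, ∑ j ∈ s, ‖a j k‖ ≤ S) :
    ∑ j ∈ s, ‖∑ k ∈ t, a j k * z k‖ ^ 2 ≤ S ^ 2 * ∑ k ∈ t, ‖z k‖ ^ 2 := by
  have hCS : ∀ j ∈ s, ‖∑ k ∈ t, a j k * z k‖ ^ 2 ≤ S * ∑ k ∈ t, ‖a j k‖ * ‖z k‖ ^ 2 := by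
    intro j hj
    calc ‖∑ k ∈ t, a j k * z k‖ ^ 2 ≤ (∑ k ∈ t, ‖a j k‖ * ‖z k‖) ^ 2 := by
          gcongr
          exact (norm_sum_le _ _).trans (Finset.sum_le_sum fun k _ => norm_mul_le _ _)
      _ ≤ (∑ k ∈ t, ‖a j k‖) * ∑ k ∈ t, ‖a j k‖ * ‖z k‖ ^ 2 :=
          Finset.sum_sq_le_sum_mul_sum_of_sq_le_mul t (fun _ _ => by positivity)
            (fun _ _ => by positivity) fun k _ => (by ring : _ = _).le
      _ ≤ S * ∑ k ∈ t, ‖a j k‖ * ‖z k‖ ^ 2 := by gcongr; exact hrow j hj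
  calc ∑ j ∈ s, ‖∑ k ∈ t, a j k * z k‖ ^ 2
      ≤ ∑ j ∈ s, S * ∑ k ∈ t, ‖a j k‖ * ‖z k‖ ^ 2 := Finset.sum_le_sum hCS
    _ = S * ∑ k ∈ t, (∑ j ∈ s, ‖a j k‖) * ‖z k‖ ^ 2 := by
        rw [← Finset.mul_sum, Finset.sum_comm]; simp only [Finset.sum_mul]
    _ ≤ S * ∑ k ∈ t, S * ‖z k‖ ^ 2 := by
        gcongr with k hk; exact hcol k hk
    _ = S ^ 2 * ∑ k ∈ t, ‖z k‖ ^ 2 := by rw [← Finset.mul_sum]; ring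

theorem lp.norm_le_of_schur [NormedRing 𝕜] (a : ι → κ → 𝕜) {S : ℝ} (hS : 0 ≤ S)
    (hrow : ∀ j (t : Finset κ), ∑ k ∈ t, ‖a j k‖ ≤ S)
    (hcol : ∀ k (s : Finset ι), ∑ j ∈ s, ‖a j k‖ ≤ S)
    {z : lp (fun _ : κ => 𝕜) 2} {u : lp (fun _ : ι => 𝕜) 2}
    (hu : ∀ j, HasSum (fun k => a j k * z k) (u j)) : ‖u‖ ≤ S * ‖z‖ := by
  refine lp.norm_le_of_forall_sum_le (by norm_num) (by positivity) fun s => ?_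
  simp only [ENNReal.toReal_ofNat, Real.rpow_two]
  have hlim : Tendsto (fun t => ∑ j ∈ s, ‖∑ k ∈ t, a j k * z k‖ ^ 2) atTop
      (𝓝 (∑ j ∈ s, ‖u j‖ ^ 2)) :=
    tendsto_finsetSum s fun j _ => ((hu j).norm.pow 2)
  -- bound the finite sections of the series defining `u j`, uniformly in the section
  refine le_of_tendsto' hlim fun t => ?_
  have hz : ∑ k ∈ t, ‖z k‖ ^ 2 ≤ ‖z‖ ^ 2 := by
    simpa using lp.sum_rpow_le_norm_rpow (p := 2) (by norm_num) z t
  calc ∑ j ∈ s, ‖∑ k ∈ t, a j k * z k‖ ^ 2 ≤ S ^ 2 * ∑ k ∈ t, ‖z k‖ ^ 2 :=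
        s.sum_norm_sum_mul_sq_le_of_schur t a z hS (fun j _ => hrow j t) fun k _ => hcol k s
    _ ≤ (S * ‖z‖) ^ 2 := by rw [mul_pow]; gcongr

theorem lp.norm_le_of_toeplitz_bound [NormedRing 𝕜] {a : ℕ → ℕ → 𝕜} {g : ℤ → ℝ}
    (hg : Summable g) (hg₀ : ∀ d, 0 ≤ g d) (ha : ∀ j k : ℕ, ‖a j k‖ ≤ g (j - k))
    {z u : lp (fun _ : ℕ => 𝕜) 2} (hu : ∀ j, HasSum (fun k => a j k * z k) (u j)) :
    ‖u‖ ≤ (∑' d, g d) * ‖z‖ :=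
  lp.norm_le_of_schur a (tsum_nonneg hg₀)
    (fun j t => (Finset.sum_le_sum fun k _ => ha j k).trans
      (sum_comp_le_tsum_of_injective hg hg₀ (i := fun k : ℕ => (j : ℤ) - k)
        (fun _ _ h => by simpa using h) t))
    (fun k s => (Finset.sum_le_sum fun j _ => ha j k).trans
      (sum_comp_le_tsum_of_injective hg hg₀ (i := fun j : ℕ => (j : ℤ) - k)
        (fun _ _ h => by simpa using h) s)) hu

end SchurTest

local notation "ℓ²" => lp (fun _ : ℕ => ℂ) 2

/-- Truncating `θ |k - n|^β` at distance `|m - n|` keeps the weight bounded, so that weighted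
vectors stay in `ℓ²`, while it still attains its full value at `m`. -/
theorem exists_bddAbove_holder_weight {β θ : ℝ} (hβ₀ : 0 < β) (hβ₁ : β ≤ 1) (hθ : 0 ≤ θ) (m n : ℕ) :
    ∃ v : ℕ → ℝ, BddAbove (Set.range v) ∧ v n = 0 ∧ v m = θ * |(m : ℝ) - n| ^ β ∧
      ∀ j k : ℕ, |v j - v k| ≤ θ * |(j : ℝ) - k| ^ β := by
  set R := |(m : ℝ) - n|
  refine ⟨fun k => θ * min |(k : ℝ) - n| R ^ β, ⟨θ * R ^ β, ?_⟩, ?_, by simp [R], fun j k => ?_⟩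
  · rintro - ⟨k, rfl⟩
    dsimp only
    gcongr
    exact min_le_right _ _
  · simp [R, zero_rpow hβ₀.ne']
  · rw [← mul_sub, abs_mul, abs_of_nonneg hθ]
    gcongr
    exact abs_min_abs_sub_rpow_sub_le hβ₀.le hβ₁ (abs_nonneg _) _ _ _

theorem norm_apply_le_mul_exp_neg_of_weight (T : ℓ² →L[ℂ] ℓ²) {M : ℝ} (hM : 0 ≤ M)
    (hT : ∀ y, ‖y‖ ≤ M * ‖T y‖) {v : ℕ → ℝ} (hv : BddAbove (Set.range v)) {g : ℤ → ℝ}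
    (hg : Summable g) (hg₀ : ∀ d, 0 ≤ g d) (hgM : (∑' d, g d) * M ≤ 1 / 2)
    (ha : ∀ j k : ℕ, ‖((exp (v j - v k) : ℂ) - 1) * T (lp.single 2 k 1) j‖ ≤ g (j - k))
    {n : ℕ} (hvn : v n = 0) {x : ℓ²} (hx : T x = lp.single 2 n 1) (m : ℕ) :
    ‖x m‖ ≤ 2 * M * exp (-v m) := by
  obtain ⟨V, hV⟩ := hv
  have hmem : Memℓp (fun k => (exp (v k) : ℂ) * x k) 2 :=
    ((lp.memℓp x).norm.const_mul (exp V)).mono fun k => by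
      rw [norm_mul, Complex.norm_real, norm_of_nonneg (exp_pos _).le]
      gcongr
      exact hV ⟨k, rfl⟩
  set y : ℓ² := ⟨_, hmem⟩
  -- `y = e^v x` solves `T y = δ_n - A y` with `A j k = (e^{v j - v k} - 1) T_{jk}`.
  have hexpand : ∀ j, HasSum (fun k => ((exp (v j - v k) : ℂ) - 1) * T (lp.single 2 k 1) j * y k)
      ((lp.single 2 n 1 - T y : ℓ²) j) := by
    intro j
    have hval : (lp.single 2 n 1 - T y : ℓ²) j = exp (v j) * T x j - T y j := by
      rw [hx, lp.coeFn_sub, Pi.sub_apply]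
      rcases eq_or_ne j n with rfl | hjn
      · simp [hvn]
      · rw [lp.single_apply_ne 2 n _ hjn, mul_zero]
    rw [hval]
    refine (((lp.hasSum_apply_single_mul T x j).mul_left _).sub
      (lp.hasSum_apply_single_mul T y j)).congr_fun fun k => ?_
    change _ * (exp (v k) * x k) = _ * (_ * x k) - _ * (exp (v k) * x k)
    rw [exp_sub]
    push_cast
    field_simp
  have hy : ‖y‖ ≤ 2 * M := by
    have hδ : ‖(lp.single 2 n 1 : ℓ²)‖ = 1 := by simp [lp.norm_single]
    have hE := lp.norm_le_of_toeplitz_bound hg hg₀ ha hexpand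
    have hTy : ‖T y‖ ≤ 1 + (∑' d, g d) * ‖y‖ := by
      linarith [norm_le_norm_add_norm_sub (lp.single 2 n 1 : ℓ²) (T y)]
    nlinarith [hT y, norm_nonneg y]
  calc ‖x m‖ = exp (-v m) * ‖y m‖ := by
        simp only [y, norm_mul, Complex.norm_real, norm_of_nonneg (exp_pos _).le, ← mul_assoc,
          ← exp_add, neg_add_cancel, exp_zero, one_mul]
    _ ≤ exp (-v m) * (2 * M) := by gcongr; exact (lp.norm_apply_le_norm two_ne_zero y m).trans hy
    _ = 2 * M * exp (-v m) := mul_comm _ _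

/-- Jaffard's theorem (sub-exponential/exponential case): if a bounded bijective
operator `T` on `ℓ²` has matrix `A_{m,n} = ⟨T δ_n, δ_m⟩` satisfying
`|A_{m,n}| ≤ C e^{-γ|m-n|^β}`, then the matrix of `T⁻¹` satisfies
`|⟨T⁻¹ δ_n, δ_m⟩| ≤ C₁ e^{-γ₁|m-n|^β}` for some `γ₁ ∈ (0,γ)` and `C₁ > 0`. -/
theorem stmt_13 (β γ : ℝ) (hβ₀ : 0 < β) (hβ₁ : β ≤ 1) (hγ : 0 < γ)
    (T : lp (fun _ : ℕ => ℂ) 2 →L[ℂ] lp (fun _ : ℕ => ℂ) 2)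
    (hTbij : Function.Bijective T) (C : ℝ) (hC : 0 < C)
    (hA : ∀ m n : ℕ,
      ‖(inner ℂ (T (lp.single 2 n (1:ℂ))) (lp.single 2 m (1:ℂ)) : ℂ)‖
        ≤ C * Real.exp (-γ * |(m:ℝ) - (n:ℝ)| ^ β)) :
    ∃ γ₁ : ℝ, 0 < γ₁ ∧ γ₁ < γ ∧ ∃ C₁ > (0:ℝ),
      ∀ m n : ℕ, ∀ x : lp (fun _ : ℕ => ℂ) 2, T x = lp.single 2 n (1:ℂ) →
        ‖(inner ℂ x (lp.single 2 m (1:ℂ)) : ℂ)‖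
          ≤ C₁ * Real.exp (-γ₁ * |(m:ℝ) - (n:ℝ)| ^ β) := by
  obtain ⟨M, hM, hpre⟩ := T.exists_preimage_norm_le hTbij.2
  have hT : ∀ y, ‖y‖ ≤ M * ‖T y‖ := fun y => by
    obtain ⟨x, hx, hxy⟩ := hpre (T y)
    rwa [hTbij.1 hx] at hxy
  have hentry (j k : ℕ) : ‖T (lp.single 2 k 1) j‖ ≤ C * exp (-γ * |(j : ℝ) - k| ^ β) := by
    simpa [lp.inner_single_right] using hA j k
  have hsum := summable_exp_neg_mul_abs_rpow (half_pos hγ) hβ₀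
  set K := ∑' d : ℤ, exp (-(γ / 2) * |(d : ℝ)| ^ β)
  have hK : 0 < K := hsum.tsum_pos (fun _ => (exp_pos _).le) 0 (exp_pos _)
  set ε := min 1 (1 / (2 * C * K * M))
  have hε : 0 < ε := lt_min one_pos (by positivity)
  refine ⟨ε * (γ / 2), by positivity, by nlinarith [min_le_left 1 (1 / (2 * C * K * M))],
    2 * M, by positivity, fun m n x hx => ?_⟩
  obtain ⟨v, hv, hvn, hvm, hvhol⟩ :=
    exists_bddAbove_holder_weight (θ := ε * (γ / 2)) hβ₀ hβ₁ (by positivity) m n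
  have hgM : (∑' d : ℤ, ε * C * exp (-(γ / 2) * |(d : ℝ)| ^ β)) * M ≤ 1 / 2 := by
    have h : ε * (2 * C * K * M) ≤ 1 := (le_div_iff₀ (by positivity)).1 (min_le_right _ _)
    rw [tsum_mul_left]
    linarith
  have ha (j k : ℕ) : ‖((exp (v j - v k) : ℂ) - 1) * T (lp.single 2 k 1) j‖ ≤
      ε * C * exp (-(γ / 2) * |(((j : ℤ) - k : ℤ) : ℝ)| ^ β) := by
    rw [norm_mul, ← Complex.ofReal_one, ← Complex.ofReal_sub, Complex.norm_real, Real.norm_eq_abs]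
    push_cast
    exact abs_exp_sub_one_mul_le hε.le (min_le_left _ _) (hvhol j k) (norm_nonneg _) (hentry j k)
  simpa [lp.inner_single_right, hvm] using norm_apply_le_mul_exp_neg_of_weight T hM.le hT hv
    (hsum.mul_left (ε * C)) (fun _ => by positivity) hgM ha hvn hx m
end

section
/- Let β ∈ (0,1] and 0 < γ' < γ. Let (A_{m,n})_{m,n∈ℕ} and (B_{m,n})_{m,n∈ℕ} be matrices of complex numbers with |A_{m,n}| ≤ C_A·e^{−γ|m−n|^β} and |B_{m,n}| ≤ C_B·e^{−γ'|m−n|^β} for all m, n and some constants C_A, C_B > 0. Then for all m, n the series Σ_{k=1}^∞ A_{m,k} B_{k,n} converges absolutely and |Σ_{k=1}^∞ A_{m,k} B_{k,n}| ≤ 2·C_A·C_B·(Σ_{j=0}^∞ e^{−(γ−γ') j^β})·e^{−γ'|m−n|^β}. In particular, the product matrix AB belongs to the class E_{γ',β}. -/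
lemma aux_rpow_add {a b p : ℝ} (ha : 0 ≤ a) (hb : 0 ≤ b) (hp : 0 ≤ p) (hp1 : p ≤ 1) :
    (a + b) ^ p ≤ a ^ p + b ^ p := by
  lift a to NNReal using ha
  lift b to NNReal using hb
  exact_mod_cast NNReal.rpow_add_le_add_rpow a b hp hp1

lemma aux_summable_s14 {c p : ℝ} (hc : 0 < c) (hp : 0 < p) :
    Summable (fun j : ℕ => Real.exp (-c * (j : ℝ) ^ p)) := by
  set N : ℕ := ⌈2 / p⌉₊ with hNdef
  have hNp : 2 ≤ (N : ℝ) * p := by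
    have h1 : (2 / p : ℝ) ≤ N := Nat.le_ceil _
    calc (2:ℝ) = 2 / p * p := by field_simp
    _ ≤ N * p := by nlinarith
  have key : ∀ j : ℕ, 1 ≤ j →
      Real.exp (-c * (j:ℝ) ^ p) ≤ ((N.factorial : ℝ) / c ^ N) * (((j:ℝ) ^ 2)⁻¹) := by
    intro j hj
    have hj1 : (1:ℝ) ≤ (j:ℝ) := by exact_mod_cast hj
    have hj0 : (0:ℝ) ≤ (j:ℝ) := by linarith
    have h2 : (c * (j:ℝ) ^ p) ^ N / (N.factorial : ℝ) ≤ Real.exp (c * (j:ℝ)^p) :=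
      Real.pow_div_factorial_le_exp _ (by positivity) N
    have h3 : (c * (j:ℝ) ^ p) ^ N = c ^ N * (j:ℝ) ^ (p * (N:ℝ)) := by
      rw [mul_pow, ← Real.rpow_natCast ((j:ℝ) ^ p) N, ← Real.rpow_mul hj0]
    have h4 : (j:ℝ) ^ (2:ℕ) ≤ (j:ℝ) ^ (p * (N:ℝ)) := by
      rw [← Real.rpow_natCast (j:ℝ) 2]
      exact Real.rpow_le_rpow_of_exponent_le hj1 (by push_cast; nlinarith)
    have h6 : c ^ N * (j:ℝ) ^ (2:ℕ) / (N.factorial : ℝ) ≤ Real.exp (c * (j:ℝ)^p) := by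
      calc c ^ N * (j:ℝ) ^ (2:ℕ) / (N.factorial : ℝ)
          ≤ c ^ N * (j:ℝ) ^ (p * (N:ℝ)) / (N.factorial : ℝ) := by
            gcongr
        _ = (c * (j:ℝ) ^ p) ^ N / (N.factorial : ℝ) := by rw [h3]
        _ ≤ Real.exp (c * (j:ℝ)^p) := h2
    have hpos : (0:ℝ) < c ^ N * (j:ℝ) ^ (2:ℕ) / (N.factorial : ℝ) := by positivity
    rw [show -c * (j:ℝ)^p = -(c * (j:ℝ)^p) by ring, Real.exp_neg]
    calc (Real.exp (c * (j:ℝ)^p))⁻¹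
        ≤ (c ^ N * (j:ℝ) ^ (2:ℕ) / (N.factorial : ℝ))⁻¹ := by
          exact inv_anti₀ hpos h6
      _ = ((N.factorial : ℝ) / c ^ N) * (((j:ℝ) ^ 2)⁻¹) := by
          have h9 : ((j:ℝ) ^ 2) ≠ 0 := by positivity
          have h10 : (c:ℝ) ^ N ≠ 0 := by positivity
          have h11 : ((N.factorial : ℝ)) ≠ 0 := by positivity
          field_simp
  have h8 : Summable (fun j : ℕ => ((N.factorial : ℝ) / c ^ N) * ((((j:ℝ) + 1) ^ 2)⁻¹)) := by
    apply Summable.mul_left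
    have h8' : Summable (fun j : ℕ => ((j:ℝ) ^ 2)⁻¹) := by
      have := Real.summable_one_div_nat_pow.2 (show 1 < 2 by norm_num)
      simpa [one_div] using this
    have := (summable_nat_add_iff 1).2 h8'
    simp only [Nat.cast_add, Nat.cast_one] at this
    exact this
  have h7 : Summable (fun j : ℕ => Real.exp (-c * (((j:ℝ)) + 1) ^ p)) := by
    refine Summable.of_nonneg_of_le (fun j => (Real.exp_pos _).le) (fun j => ?_) h8
    have := key (j + 1) (by omega)
    push_cast at this
    exact this
  apply (summable_nat_add_iff (f := fun j : ℕ => Real.exp (-c * (j:ℝ) ^ p)) 1).1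
  refine h7.congr fun j => ?_
  push_cast
  ring_nf

/-- If `A ∈ E_{γ,β}` with constant `C_A` and `B ∈ E_{γ',β}` with constant `C_B`,
`0 < γ' < γ`, then the product series converge absolutely and
`|(AB)_{m,n}| ≤ 2 C_A C_B (Σ_{j=0}^∞ e^{-(γ-γ')j^β}) e^{-γ'|m-n|^β}`;
in particular `AB ∈ E_{γ',β}`. -/
theorem stmt_14 (β γ γ' : ℝ) (hβ₀ : 0 < β) (hβ₁ : β ≤ 1)
    (hγ' : 0 < γ') (hγ'γ : γ' < γ)
    (A B : ℕ → ℕ → ℂ) (CA CB : ℝ) (hCA : 0 < CA) (hCB : 0 < CB)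
    (hA : ∀ m n : ℕ, 1 ≤ m → 1 ≤ n →
      ‖A m n‖ ≤ CA * Real.exp (-γ * |(m:ℝ) - (n:ℝ)| ^ β))
    (hB : ∀ m n : ℕ, 1 ≤ m → 1 ≤ n →
      ‖B m n‖ ≤ CB * Real.exp (-γ' * |(m:ℝ) - (n:ℝ)| ^ β)) :
    ∀ m n : ℕ, 1 ≤ m → 1 ≤ n →
      Summable (fun k : ℕ => ‖A m (k+1) * B (k+1) n‖) ∧
      ‖∑' k : ℕ, A m (k+1) * B (k+1) n‖
        ≤ 2 * CA * CB * (∑' j : ℕ, Real.exp (-(γ - γ') * (j:ℝ) ^ β)) *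
          Real.exp (-γ' * |(m:ℝ) - (n:ℝ)| ^ β) := by
  intro m n hm hn
  have hc : 0 < γ - γ' := by linarith
  set f : ℕ → ℝ := fun j => Real.exp (-(γ - γ') * (j:ℝ) ^ β) with hfdef
  have hf : Summable f := aux_summable_s14 hc hβ₀
  have hfpos : ∀ j, 0 ≤ f j := fun j => (Real.exp_pos _).le
  set D : ℝ := CA * CB * Real.exp (-γ' * |(m:ℝ) - (n:ℝ)| ^ β) with hDdef
  have hD0 : 0 ≤ D := by positivity
  set d : ℕ → ℕ := fun k => if k + 1 ≤ m then m - (k+1) else k + 1 - m with hddef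
  have hdcast : ∀ k : ℕ, ((d k : ℕ) : ℝ) = |(m:ℝ) - ((k+1 : ℕ):ℝ)| := by
    intro k
    simp only [hddef]
    split_ifs with h
    · have h' : ((k:ℝ)+1) ≤ (m:ℝ) := by exact_mod_cast h
      rw [abs_of_nonneg (by push_cast; linarith)]
      push_cast [h]
      ring
    · have h' : (m:ℝ) ≤ (k:ℝ)+1 := by exact_mod_cast (le_of_not_ge h)
      rw [abs_of_nonpos (by push_cast; linarith)]
      push_cast [le_of_not_ge h]
      ring
  -- pointwise bound
  have key : ∀ k : ℕ, ‖A m (k+1) * B (k+1) n‖ ≤ D * f (d k) := by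
    intro k
    have h1 := hA m (k+1) hm (by omega)
    have h2 := hB (k+1) n (by omega) hn
    set a : ℝ := |(m:ℝ) - ((k+1 : ℕ):ℝ)| with hadef
    set b : ℝ := |((k+1 : ℕ):ℝ) - (n:ℝ)| with hbdef
    set t : ℝ := |(m:ℝ) - (n:ℝ)| with htdef
    have htab : t ≤ a + b := abs_sub_le (m:ℝ) ((k+1:ℕ):ℝ) (n:ℝ)
    have hrp : t ^ β ≤ a ^ β + b ^ β := by
      calc t ^ β ≤ (a + b) ^ β := Real.rpow_le_rpow (abs_nonneg _) htab hβ₀.le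
        _ ≤ a ^ β + b ^ β := aux_rpow_add (abs_nonneg _) (abs_nonneg _) hβ₀.le hβ₁
    have hexp : Real.exp (-γ * a ^ β) * Real.exp (-γ' * b ^ β)
        ≤ Real.exp (-γ' * t ^ β) * Real.exp (-(γ - γ') * a ^ β) := by
      rw [← Real.exp_add, ← Real.exp_add, Real.exp_le_exp]
      nlinarith [hrp, hγ'.le]
    calc ‖A m (k+1) * B (k+1) n‖ = ‖A m (k+1)‖ * ‖B (k+1) n‖ := norm_mul _ _
      _ ≤ (CA * Real.exp (-γ * a ^ β)) * (CB * Real.exp (-γ' * b ^ β)) :=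
          mul_le_mul h1 h2 (norm_nonneg _) (by positivity)
      _ = CA * CB * (Real.exp (-γ * a ^ β) * Real.exp (-γ' * b ^ β)) := by ring
      _ ≤ CA * CB * (Real.exp (-γ' * t ^ β) * Real.exp (-(γ - γ') * a ^ β)) := by
          apply mul_le_mul_of_nonneg_left hexp (by positivity)
      _ = D * f (d k) := by
          simp only [hDdef, hfdef, hdcast k]
          ring
  -- split the majorant
  set g1 : ℕ → ℝ := fun k => if k + 1 ≤ m then f (d k) else 0 with hg1def
  set g2 : ℕ → ℝ := fun k => if k + 1 ≤ m then 0 else f (d k) with hg2def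
  have hgsplit : ∀ k, f (d k) = g1 k + g2 k := by
    intro k
    simp only [hg1def, hg2def]
    split_ifs <;> ring
  have hg1sum : Summable g1 := by
    apply summable_of_ne_finset_zero (s := Finset.range m)
    intro k hk
    simp only [Finset.mem_range, not_lt] at hk
    simp only [hg1def]
    rw [if_neg (by omega)]
  have hg1le : ∑' k, g1 k ≤ ∑' j, f j := by
    rw [tsum_eq_sum (s := Finset.range m) (by
      intro k hk
      simp only [Finset.mem_range, not_lt] at hk
      simp only [hg1def]
      rw [if_neg (by omega)])]
    have : ∀ k ∈ Finset.range m, g1 k = f (m - 1 - k) := by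
      intro k hk
      simp only [Finset.mem_range] at hk
      have hkm : k + 1 ≤ m := by omega
      simp only [hg1def, hddef, if_pos hkm]
      rw [show m - (k + 1) = m - 1 - k from by omega]
    rw [Finset.sum_congr rfl this, Finset.sum_range_reflect]
    exact Summable.sum_le_tsum _ (fun j _ => hfpos j) hf
  have hg2shift : ∀ j : ℕ, g2 (j + m) = f (j + 1) := by
    intro j
    simp only [hg2def, hddef]
    rw [if_neg (by omega), if_neg (by omega), show j + m + 1 - m = j + 1 from by omega]
  have hg2sum : Summable g2 := by
    rw [← summable_nat_add_iff m]
    exact ((summable_nat_add_iff 1).2 hf).congr fun j => (hg2shift j).symm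
  have hg2le : ∑' k, g2 k ≤ ∑' j, f j := by
    have hsplit := Summable.sum_add_tsum_nat_add (f := g2) m hg2sum
    have hz : ∑ i ∈ Finset.range m, g2 i = 0 := by
      apply Finset.sum_eq_zero
      intro i hi
      simp only [Finset.mem_range] at hi
      simp only [hg2def]
      rw [if_pos (by omega)]
    rw [← hsplit, hz, zero_add]
    calc ∑' j : ℕ, g2 (j + m) = ∑' j : ℕ, f (j + 1) := tsum_congr hg2shift
      _ ≤ ∑' j, f j := by
          apply Summable.tsum_le_tsum_of_inj (fun j => j + 1) (add_left_injective 1)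
            (fun c _ => hfpos c) (fun j => le_rfl) ((summable_nat_add_iff 1).2 hf) hf
  have hgsum : Summable (fun k => f (d k)) := by
    refine (hg1sum.add hg2sum).congr fun k => (hgsplit k).symm
  have hgle : ∑' k, f (d k) ≤ 2 * ∑' j, f j := by
    calc ∑' k, f (d k) = ∑' k, (g1 k + g2 k) := tsum_congr hgsplit
      _ = ∑' k, g1 k + ∑' k, g2 k := Summable.tsum_add hg1sum hg2sum
      _ ≤ ∑' j, f j + ∑' j, f j := add_le_add hg1le hg2le
      _ = 2 * ∑' j, f j := by ring
  have hsummable : Summable (fun k : ℕ => ‖A m (k+1) * B (k+1) n‖) :=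
    Summable.of_nonneg_of_le (fun k => norm_nonneg _) key (hgsum.mul_left D)
  refine ⟨hsummable, ?_⟩
  calc ‖∑' k : ℕ, A m (k+1) * B (k+1) n‖
      ≤ ∑' k : ℕ, ‖A m (k+1) * B (k+1) n‖ := norm_tsum_le_tsum_norm hsummable
    _ ≤ ∑' k : ℕ, D * f (d k) := Summable.tsum_le_tsum key hsummable (hgsum.mul_left D)
    _ = D * ∑' k, f (d k) := tsum_mul_left
    _ ≤ D * (2 * ∑' j, f j) := mul_le_mul_of_nonneg_left hgle hD0
    _ = 2 * CA * CB * (∑' j : ℕ, Real.exp (-(γ - γ') * (j:ℝ) ^ β)) *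
          Real.exp (-γ' * |(m:ℝ) - (n:ℝ)| ^ β) := by
        simp only [hDdef, hfdef]
        ring
end

section
/- Let β ∈ (0,1] and γ > 0. If the matrices (A_{m,n})_{m,n∈ℕ} and (B_{m,n})_{m,n∈ℕ} both belong to the class E_{γ,β}, then for every γ' ∈ (0, γ), all the series Σ_{k=1}^∞ A_{m,k} B_{k,n} converge absolutely and the product matrix AB belongs to E_{γ',β}, i.e., there exists C'' > 0 with |(AB)_{m,n}| ≤ C''·e^{−γ'|m−n|^β} for all m, n. -/
/-!
Since `0 < β ≤ 1`, `t ↦ t ^ β` is subadditive on `[0, ∞)`, so `|m - n| ^ β ≤ |m - k| ^ β + |k - n| ^ β`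
and hence `γ (|m - k| ^ β + |k - n| ^ β) ≥ γ' |m - n| ^ β + (γ - γ') |m - k| ^ β`. This bounds
`|A m k * B k n|` by `C_A C_B e^{-γ' |m - n| ^ β} e^{-(γ - γ') |m - k| ^ β}`, and the last factor is
summable in `k`, with a sum bounded by the sum over all of `ℤ`, independently of `m`.
-/

open Real Filter Asymptotics

noncomputable def subexpWeight (β γ x : ℝ) : ℝ := exp (-γ * |x| ^ β)

lemma subexpWeight_pos (β γ x : ℝ) : 0 < subexpWeight β γ x := exp_pos _

lemma subexpWeight_mul_le {β γ γ' : ℝ} (hβ₀ : 0 < β) (hβ₁ : β ≤ 1) (hγ' : 0 ≤ γ')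
    (hγ'γ : γ' ≤ γ) (x y z : ℝ) :
    subexpWeight β γ (x - y) * subexpWeight β γ (y - z) ≤
      subexpWeight β γ' (x - z) * subexpWeight β (γ - γ') (x - y) := by
  unfold subexpWeight
  rw [← exp_add, ← exp_add, exp_le_exp]
  have hsub : |x - z| ^ β ≤ |x - y| ^ β + |y - z| ^ β :=
    (rpow_le_rpow (abs_nonneg _) (abs_sub_le x y z) hβ₀.le).trans
      (rpow_add_le_add_rpow (abs_nonneg _) (abs_nonneg _) hβ₀.le hβ₁)
  have hyz : 0 ≤ |y - z| ^ β := rpow_nonneg (abs_nonneg _) _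
  nlinarith [mul_le_mul_of_nonneg_left hsub hγ']

lemma summable_exp_neg_mul_rpow_nat {β ε : ℝ} (hβ : 0 < β) (hε : 0 < ε) :
    Summable fun j : ℕ => exp (-ε * (j : ℝ) ^ β) := by
  have hj : Tendsto (fun j : ℕ => (j : ℝ) ^ β) atTop atTop :=
    (tendsto_rpow_atTop hβ).comp tendsto_natCast_atTop_atTop
  have hO : (fun j : ℕ => exp (-ε * (j : ℝ) ^ β)) =O[atTop] fun j : ℕ => (j : ℝ) ^ (-2 : ℝ) := by
    refine ((isLittleO_exp_neg_mul_rpow_atTop hε (-2 / β)).comp_tendsto hj).isBigO.congr_right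
      fun j => ?_
    rw [Function.comp_apply, ← rpow_mul (Nat.cast_nonneg j), mul_div_cancel₀ _ hβ.ne']
  exact summable_of_isBigO_nat (summable_nat_rpow.2 (by norm_num)) hO

lemma summable_subexpWeight_int {β ε : ℝ} (hβ : 0 < β) (hε : 0 < ε) :
    Summable fun j : ℤ => subexpWeight β ε j := by
  refine Summable.of_nat_of_neg ?_ ?_ <;>
  · refine (summable_exp_neg_mul_rpow_nat hβ hε).congr fun j => ?_
    simp [subexpWeight]

lemma summable_subexpWeight_sub_succ {β ε : ℝ} (hβ : 0 < β) (hε : 0 < ε) (m : ℕ) :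
    Summable (fun k : ℕ => subexpWeight β ε (m - (k + 1 : ℕ))) ∧
      ∑' k : ℕ, subexpWeight β ε (m - (k + 1 : ℕ)) ≤ ∑' j : ℤ, subexpWeight β ε j := by
  have hi : Function.Injective fun k : ℕ => (m : ℤ) - (k + 1 : ℕ) := fun a b h => by
    simpa using h
  have hcast : (fun k : ℕ => subexpWeight β ε (m - (k + 1 : ℕ))) =
      (fun j : ℤ => subexpWeight β ε j) ∘ fun k : ℕ => (m : ℤ) - (k + 1 : ℕ) := by
    ext k
    simp
  rw [hcast]
  exact ⟨(summable_subexpWeight_int hβ hε).comp_injective hi,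
    tsum_comp_le_tsum_of_inj (summable_subexpWeight_int hβ hε)
      (fun j => (subexpWeight_pos β ε j).le) hi⟩

lemma norm_mul_le_subexpWeight {R : Type*} [SeminormedRing R] {a b : R}
    {β γ γ' CA CB x y z : ℝ} (hβ₀ : 0 < β) (hβ₁ : β ≤ 1) (hγ' : 0 ≤ γ') (hγ'γ : γ' ≤ γ)
    (hCA : 0 ≤ CA) (hCB : 0 ≤ CB) (ha : ‖a‖ ≤ CA * subexpWeight β γ (x - y))
    (hb : ‖b‖ ≤ CB * subexpWeight β γ (y - z)) :
    ‖a * b‖ ≤ CA * CB * subexpWeight β γ' (x - z) * subexpWeight β (γ - γ') (x - y) :=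
  calc ‖a * b‖ ≤ (CA * subexpWeight β γ (x - y)) * (CB * subexpWeight β γ (y - z)) :=
        (norm_mul_le a b).trans
          (mul_le_mul ha hb (norm_nonneg _) (mul_nonneg hCA (subexpWeight_pos _ _ _).le))
    _ = CA * CB * (subexpWeight β γ (x - y) * subexpWeight β γ (y - z)) := by ring
    _ ≤ CA * CB * (subexpWeight β γ' (x - z) * subexpWeight β (γ - γ') (x - y)) :=
        mul_le_mul_of_nonneg_left (subexpWeight_mul_le hβ₀ hβ₁ hγ' hγ'γ x y z)
          (mul_nonneg hCA hCB)
    _ = CA * CB * subexpWeight β γ' (x - z) * subexpWeight β (γ - γ') (x - y) := by ring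

theorem stmt_15_general (β γ : ℝ) (hβ₀ : 0 < β) (hβ₁ : β ≤ 1)
    (A B : ℕ → ℕ → ℂ)
    (hA : ∃ CA > (0:ℝ), ∀ m n : ℕ, 1 ≤ m → 1 ≤ n →
      ‖A m n‖ ≤ CA * Real.exp (-γ * |(m:ℝ) - (n:ℝ)| ^ β))
    (hB : ∃ CB > (0:ℝ), ∀ m n : ℕ, 1 ≤ m → 1 ≤ n →
      ‖B m n‖ ≤ CB * Real.exp (-γ * |(m:ℝ) - (n:ℝ)| ^ β)) :
    ∀ γ' : ℝ, 0 < γ' → γ' < γ →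
      (∀ m n : ℕ, 1 ≤ m → 1 ≤ n → Summable (fun k : ℕ => ‖A m (k+1) * B (k+1) n‖)) ∧
      ∃ C'' > (0:ℝ), ∀ m n : ℕ, 1 ≤ m → 1 ≤ n →
        ‖∑' k : ℕ, A m (k+1) * B (k+1) n‖
          ≤ C'' * Real.exp (-γ' * |(m:ℝ) - (n:ℝ)| ^ β) := by
  intro γ' hγ' hγ'γ
  obtain ⟨CA, hCA, hAb⟩ := hA
  obtain ⟨CB, hCB, hBb⟩ := hB
  have hε : 0 < γ - γ' := sub_pos.2 hγ'γ
  have hrow := summable_subexpWeight_sub_succ hβ₀ hε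
  set S := ∑' j : ℤ, subexpWeight β (γ - γ') j
  have hS : 0 < S := (summable_subexpWeight_int hβ₀ hε).tsum_pos
    (fun j => (subexpWeight_pos β _ j).le) 0 (subexpWeight_pos β _ _)
  have hterm (m n k : ℕ) (hm : 1 ≤ m) (hn : 1 ≤ n) :
      ‖A m (k + 1) * B (k + 1) n‖ ≤ CA * CB * subexpWeight β γ' (m - n) *
        subexpWeight β (γ - γ') (m - (k + 1 : ℕ)) :=
    norm_mul_le_subexpWeight hβ₀ hβ₁ hγ'.le hγ'γ.le hCA.le hCB.le
      (hAb m (k + 1) hm k.succ_pos) (hBb (k + 1) n k.succ_pos hn)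
  refine ⟨fun m n hm hn => ?_, CA * CB * S, by positivity, fun m n hm hn => ?_⟩
  · exact Summable.of_nonneg_of_le (fun _ => norm_nonneg _) (hterm m n · hm hn)
      ((hrow m).1.mul_left _)
  · have hC : 0 ≤ CA * CB * subexpWeight β γ' (m - n) :=
      mul_nonneg (by positivity) (subexpWeight_pos _ _ _).le
    calc ‖∑' k : ℕ, A m (k + 1) * B (k + 1) n‖
        ≤ CA * CB * subexpWeight β γ' (m - n) *
            ∑' k : ℕ, subexpWeight β (γ - γ') (m - (k + 1 : ℕ)) :=
          tsum_of_norm_bounded ((hrow m).1.hasSum.mul_left _) (hterm m n · hm hn)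
      _ ≤ CA * CB * subexpWeight β γ' (m - n) * S := mul_le_mul_of_nonneg_left (hrow m).2 hC
      _ = CA * CB * S * Real.exp (-γ' * |(m:ℝ) - (n:ℝ)| ^ β) := by
          rw [subexpWeight]
          ring

/-- If the matrices `A` and `B` both belong to `E_{γ,β}`, then for every
`γ' ∈ (0,γ)` the product series converge absolutely and `AB ∈ E_{γ',β}`. -/
theorem stmt_15 (β γ : ℝ) (hβ₀ : 0 < β) (hβ₁ : β ≤ 1) (hγ : 0 < γ)
    (A B : ℕ → ℕ → ℂ)
    (hA : ∃ CA > (0:ℝ), ∀ m n : ℕ, 1 ≤ m → 1 ≤ n →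
      ‖A m n‖ ≤ CA * Real.exp (-γ * |(m:ℝ) - (n:ℝ)| ^ β))
    (hB : ∃ CB > (0:ℝ), ∀ m n : ℕ, 1 ≤ m → 1 ≤ n →
      ‖B m n‖ ≤ CB * Real.exp (-γ * |(m:ℝ) - (n:ℝ)| ^ β)) :
    ∀ γ' : ℝ, 0 < γ' → γ' < γ →
      (∀ m n : ℕ, 1 ≤ m → 1 ≤ n → Summable (fun k : ℕ => ‖A m (k+1) * B (k+1) n‖)) ∧
      ∃ C'' > (0:ℝ), ∀ m n : ℕ, 1 ≤ m → 1 ≤ n →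
        ‖∑' k : ℕ, A m (k+1) * B (k+1) n‖
          ≤ C'' * Real.exp (-γ' * |(m:ℝ) - (n:ℝ)| ^ β) :=
  stmt_15_general β γ hβ₀ hβ₁ A B hA hB
end

section
/- Let H be a complex Hilbert space with orthonormal (Hilbert) basis (h_n)_{n≥1}. Let r be a positive integer, and for i = 1, …, r let ε_i ≥ 0 and let (a^i_n)_{n≥1} be complex sequences satisfying |a^i_n| ≤ ε_i for all n ≥ 2, Σ_{i=1}^r |a^i_1| ≤ 1, and Σ_{i=1}^r ε_i < 1. Then there exists a bounded bijective linear operator U on H with U h_n = h_n + Σ_{i=1}^r a^i_n h_{n+i} for every n; in particular, the sequence (e_n)_{n≥1} with e_n := h_n + Σ_{i=1}^r a^i_n h_{n+i} is a Riesz basis for H. Moreover, ‖U f‖ ≤ 3‖f‖ for all f ∈ H. -/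
/-!
Write `U = 1 + S + R`. Here `S = ∑ i, S i` with `S i` the weighted shift `h n ↦ a i n • h (n + i + 1)`
for `n ≥ 1` (and `h 0 ↦ 0`), so `‖S‖ ≤ ∑ i, ε i < 1`, and `R f = ⟪h 0, f⟫ • w` with
`w = ∑ i, a i 0 • h (i + 1)`, so `‖w‖ ≤ 1`. Both `S` and `R` take values orthogonal to `h 0`, hence
`R * S = 0` and `R * R = 0`, and `U = (1 + R) * (1 + S)` is a product of a unipotent operator and
an operator invertible by the Neumann series.
-/

open InnerProductSpace
open scoped InnerProductSpace ENNReal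

section WeightedShift

variable {ι κ 𝕜 E F : Type*} [RCLike 𝕜]

theorem lp.exists_diagonal {p : ℝ≥0∞} [Fact (1 ≤ p)] (b : ι → 𝕜) {C : ℝ} (hC : 0 ≤ C)
    (hb : ∀ i, ‖b i‖ ≤ C) :
    ∃ D : lp (fun _ : ι => 𝕜) p →L[𝕜] lp (fun _ : ι => 𝕜) p,
      (∀ x i, D x i = b i * x i) ∧ ‖D‖ ≤ C := by
  have hle (x : lp (fun _ : ι => 𝕜) p) (i : ι) : ‖b i * x i‖ ≤ ‖((C : 𝕜) • x) i‖ := by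
    rw [norm_mul, lp.coeFn_smul, Pi.smul_apply, norm_smul, RCLike.norm_ofReal, abs_of_nonneg hC]
    gcongr
    exact hb i
  let D : lp (fun _ : ι => 𝕜) p →ₗ[𝕜] lp (fun _ : ι => 𝕜) p :=
    { toFun x := ⟨fun i => b i * x i, ((C : 𝕜) • x).prop.mono' (hle x)⟩
      map_add' x y := lp.ext <| funext fun i => mul_add _ _ _
      map_smul' c x := lp.ext <| funext fun i => mul_left_comm _ _ _ }
  have hD (x : lp (fun _ : ι => 𝕜) p) : ‖D x‖ ≤ C * ‖x‖ := by
    calc ‖D x‖ ≤ ‖(C : 𝕜) • x‖ := lp.norm_mono (zero_lt_one.trans_le Fact.out).ne' (hle x)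
      _ = C * ‖x‖ := by rw [norm_smul, RCLike.norm_ofReal, abs_of_nonneg hC]
  exact ⟨D.mkContinuous C hD, fun _ _ => rfl, LinearMap.mkContinuous_norm_le _ hC _⟩

variable [NormedAddCommGroup E] [InnerProductSpace 𝕜 E]
  [NormedAddCommGroup F] [InnerProductSpace 𝕜 F] [CompleteSpace F]

theorem Orthonormal.inner_linearIsometry_eq_zero {e : ι → F} (he : Orthonormal 𝕜 e)
    {v : F} (hv : ∀ i, ⟪v, e i⟫_𝕜 = 0) (x : lp (fun _ : ι => 𝕜) 2) :
    ⟪v, he.orthogonalFamily.linearIsometry x⟫_𝕜 = 0 := by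
  have := (innerSL 𝕜 v).hasSum (he.orthogonalFamily.hasSum_linearIsometry x)
  refine this.unique ?_
  convert hasSum_zero with i
  simp [hv i]

theorem HilbertBasis.exists_weightedShift (h : HilbertBasis ι 𝕜 E) {e : κ → F}
    (he : Orthonormal 𝕜 e) {σ : ι → κ} (hσ : σ.Injective) (b : ι → 𝕜) {C : ℝ} (hC : 0 ≤ C)
    (hb : ∀ i, ‖b i‖ ≤ C) :
    ∃ T : E →L[𝕜] F, (∀ i, T (h i) = b i • e (σ i)) ∧ ‖T‖ ≤ C ∧
      ∀ k ∉ Set.range σ, ∀ f, ⟪e k, T f⟫_𝕜 = 0 := by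
  classical
  obtain ⟨D, hDapply, hDnorm⟩ := lp.exists_diagonal (p := 2) b hC hb
  let J := (he.comp σ hσ).orthogonalFamily.linearIsometry
  refine ⟨J.toContinuousLinearMap ∘L D ∘L h.repr.toContinuousLinearEquiv.toContinuousLinearMap,
    fun i => ?_, ?_, fun k hk f => ?_⟩
  · have : D (h.repr (h i)) = lp.single 2 i (b i) := by
      ext j
      rw [hDapply, h.repr_self, lp.single_apply, lp.single_apply]
      rcases eq_or_ne j i with rfl | hji <;> simp [*]
    simp [J, this]
  · refine ContinuousLinearMap.opNorm_le_bound _ hC fun f => ?_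
    simp only [ContinuousLinearMap.comp_apply, LinearIsometry.coe_toContinuousLinearMap,
      LinearIsometry.norm_map]
    calc ‖D _‖ ≤ C * ‖h.repr f‖ := D.le_of_opNorm_le hDnorm _
      _ = C * ‖f‖ := by simp
  · exact (he.comp σ hσ).inner_linearIsometry_eq_zero
      (fun i => he.inner_eq_zero fun hki => hk ⟨i, hki.symm⟩) _

end WeightedShift

section RankOnePerturbation

variable {𝕜 E : Type*} [RCLike 𝕜] [NormedAddCommGroup E] [InnerProductSpace 𝕜 E]
  [CompleteSpace E]

theorem isUnit_one_add_add_rankOne {S : E →L[𝕜] E} (hS : ‖S‖ < 1) {u w : E}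
    (hSu : ∀ f, ⟪u, S f⟫_𝕜 = 0) (hw : ⟪u, w⟫_𝕜 = 0) :
    IsUnit (1 + S + rankOne 𝕜 w u) := by
  set R := rankOne 𝕜 w u
  have hRS : R * S = 0 := by ext f; simp [R, hSu]
  have hRR : R * R = 0 := by ext f; simp [R, hw]
  have hfactor : 1 + S + R = (1 + R) * (1 + S) := by
    rw [mul_add, add_mul, add_mul, hRS]; noncomm_ring
  rw [hfactor]
  refine (IsNilpotent.isUnit_one_add ⟨2, by rw [sq, hRR]⟩).mul ?_
  simpa using isUnit_one_sub_of_norm_lt_one (x := -S) (by rwa [norm_neg])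

end RankOnePerturbation

theorem stmt_19_general {H : Type*} [NormedAddCommGroup H] [InnerProductSpace ℂ H]
    [CompleteSpace H]
    (h : HilbertBasis ℕ ℂ H) (r : ℕ)
    (ε : Fin r → ℝ) (hε : ∀ i, 0 ≤ ε i)
    (a : Fin r → ℕ → ℂ)
    (ha : ∀ i, ∀ n : ℕ, 1 ≤ n → ‖a i n‖ ≤ ε i)
    (ha1 : ∑ i, ‖a i 0‖ ≤ 1)
    (hε1 : ∑ i, ε i < 1) :
    ∃ U : H →L[ℂ] H, Function.Bijective U ∧
      (∀ n : ℕ, U (h n) = h n + ∑ i : Fin r, a i n • h (n + (i:ℕ) + 1)) ∧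
      (∀ f : H, ‖U f‖ ≤ 3 * ‖f‖) := by
  have hshift (i : Fin r) := h.exists_weightedShift h.orthonormal (σ := fun n => n + i + 1)
    (fun _ _ hmn => by simpa using hmn) (fun n => if n = 0 then 0 else a i n) (hε i)
    (fun n => by
      split_ifs with hn
      · simpa using hε i
      · exact ha i n (Nat.one_le_iff_ne_zero.2 hn))
  choose T hTapply hTnorm hTorth using hshift
  set S := ∑ i, T i
  set w := ∑ i : Fin r, a i 0 • h (i + 1)
  have hSnorm : ‖S‖ < 1 :=
    (norm_sum_le _ _).trans_lt ((Finset.sum_le_sum fun i _ => hTnorm i).trans_lt hε1)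
  have hS0 (f : H) : ⟪h 0, S f⟫_ℂ = 0 := by
    simp [S, fun i => hTorth i 0 (by simp)]
  have hw0 : ⟪h 0, w⟫_ℂ = 0 := by
    simp [w, h.orthonormal.inner_eq_zero]
  have hwnorm : ‖w‖ ≤ 1 :=
    (norm_sum_le _ _).trans (by simpa [norm_smul, h.orthonormal.1] using ha1)
  refine ⟨1 + S + rankOne ℂ w (h 0),
    ContinuousLinearMap.isUnit_iff_bijective.1 (isUnit_one_add_add_rankOne hSnorm hS0 hw0),
    fun n => ?_, fun f => ?_⟩
  · rcases n with _ | n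
    · simp [S, w, hTapply, h.orthonormal.1]
    · simp [S, hTapply, h.orthonormal.inner_eq_zero]
  · have hU : ‖1 + S + rankOne ℂ w (h 0)‖ ≤ 3 := calc
      _ ≤ ‖(1 : H →L[ℂ] H)‖ + ‖S‖ + ‖rankOne ℂ w (h 0)‖ := norm_add₃_le
      _ ≤ 1 + 1 + 1 := by
        gcongr
        · exact ContinuousLinearMap.norm_id_le
        · simpa [h.orthonormal.1] using hwnorm
      _ = 3 := by norm_num
    exact (ContinuousLinearMap.le_opNorm _ f).trans (by gcongr)

/-- Construction of a Riesz basis as a perturbation of an orthonormal basis: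
with `|a^i_n| ≤ ε_i` for `n ≥ 2` (here 0-indexed: for indices `n ≥ 1`),
`Σ_i |a^i_1| ≤ 1` (here the index `0` term), and `Σ_i ε_i < 1`, the operator
`U h_n = h_n + Σ_{i=1}^r a^i_n h_{n+i}` is a bounded bijection on `H` with
`‖U f‖ ≤ 3 ‖f‖`; in particular `(e_n) = (U h_n)` is a Riesz basis for `H`. -/
theorem stmt_19 {H : Type*} [NormedAddCommGroup H] [InnerProductSpace ℂ H]
    [CompleteSpace H]
    (h : HilbertBasis ℕ ℂ H) (r : ℕ) (hr : 1 ≤ r)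
    (ε : Fin r → ℝ) (hε : ∀ i, 0 ≤ ε i)
    (a : Fin r → ℕ → ℂ)
    (ha : ∀ i, ∀ n : ℕ, 1 ≤ n → ‖a i n‖ ≤ ε i)
    (ha1 : ∑ i, ‖a i 0‖ ≤ 1)
    (hε1 : ∑ i, ε i < 1) :
    ∃ U : H →L[ℂ] H, Function.Bijective U ∧
      (∀ n : ℕ, U (h n) = h n + ∑ i : Fin r, a i n • h (n + (i:ℕ) + 1)) ∧
      (∀ f : H, ‖U f‖ ≤ 3 * ‖f‖) :=
  stmt_19_general h r ε hε a ha ha1 hε1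
end
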